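/- arXiv:2012.11275 — 4 statements merged into one kernel-verified Lean document; each statement's English description precedes it below -/
import Mathlib

section
/- Let n ≥ 1, let L : ℝ × ℝⁿ × ℝⁿ → ℝ be a smooth regular Lagrangian with L(t,q,v) ≠ 0 at every point, and let F_a(t,q,v) be smooth generalized forces. Suppose Λ : ℝ × ℝⁿ × ℝⁿ → ℝ is a smooth first integral, i.e. ΓΛ = 0 identically. Let f : ℝ × ℝⁿ × ℝⁿ → ℝ be any smooth function, define ξ = (1/L)(f − Λ + γ^{ab}(∂L/∂v^a)(∂Λ/∂v^b)) and η^a = −γ^{ab} ∂Λ/∂v^b + ξ v^a, and let φ^a(t,q,v) be any smooth functions satisfying φ^a ∂L/∂v^a = −γ^{ab} F_b ∂Λ/∂v^a identically. Then the weak Noether condition ξ ∂L/∂t + η^a ∂L/∂q^a + (Γη^a − v^a Γξ + φ^a) ∂L/∂v^a + L·(Γξ) = Γf holds identically on ℝ × ℝⁿ × ℝⁿ. (Inverse Noether theorem: every first integral of a regular holonomic Lagrangian system with generalized forces arises from a weak Noether symmetry.) -/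
/-- Partial derivative with respect to the time variable `t` of a function
`H(t, q, v)` on `ℝ × ℝⁿ × ℝⁿ`. -/
noncomputable def pT {n : ℕ} (H : ℝ → (Fin n → ℝ) → (Fin n → ℝ) → ℝ)
    (t : ℝ) (q v : Fin n → ℝ) : ℝ :=
  deriv (fun s => H s q v) t

/-- Partial derivative with respect to the coordinate `q^a`. -/
noncomputable def pQ {n : ℕ} (H : ℝ → (Fin n → ℝ) → (Fin n → ℝ) → ℝ)
    (a : Fin n) (t : ℝ) (q v : Fin n → ℝ) : ℝ :=
  deriv (fun s => H t (Function.update q a s) v) (q a)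

/-- Partial derivative with respect to the velocity `v^a`. -/
noncomputable def pV {n : ℕ} (H : ℝ → (Fin n → ℝ) → (Fin n → ℝ) → ℝ)
    (a : Fin n) (t : ℝ) (q v : Fin n → ℝ) : ℝ :=
  deriv (fun s => H t q (Function.update v a s)) (v a)

/-- The total time derivative (Hamiltonian vector field) `Γ` along the dynamics
`q̈^a = ω^a`:  `ΓH = ∂H/∂t + v^a ∂H/∂q^a + ω^a ∂H/∂v^a`. -/
noncomputable def Gam {n : ℕ} (ω : Fin n → ℝ → (Fin n → ℝ) → (Fin n → ℝ) → ℝ)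
    (H : ℝ → (Fin n → ℝ) → (Fin n → ℝ) → ℝ) (t : ℝ) (q v : Fin n → ℝ) : ℝ :=
  pT H t q v + ∑ a, v a * pQ H a t q v + ∑ a, ω a t q v * pV H a t q v

section InverseNoetherAux

variable {n : ℕ}

/-- Uncurried version of a function on `ℝ × ℝⁿ × ℝⁿ`. -/
def INunc {n : ℕ} (H : ℝ → (Fin n → ℝ) → (Fin n → ℝ) → ℝ) :
    ℝ × (Fin n → ℝ) × (Fin n → ℝ) → ℝ :=
  fun p => H p.1 p.2.1 p.2.2

lemma INaffine (p u : ℝ × (Fin n → ℝ) × (Fin n → ℝ)) (x : ℝ) :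
    HasDerivAt (fun s => p + (s - x) • u) u x := by
  simpa using (((hasDerivAt_id x).sub_const x).smul_const u).const_add p

lemma INderiv_comp (G : ℝ × (Fin n → ℝ) × (Fin n → ℝ) → ℝ) (p : ℝ × (Fin n → ℝ) × (Fin n → ℝ))
    (hG : DifferentiableAt ℝ G p) {c : ℝ → ℝ × (Fin n → ℝ) × (Fin n → ℝ)}
    {u : ℝ × (Fin n → ℝ) × (Fin n → ℝ)} {x : ℝ} (hc : HasDerivAt c u x) (hcx : c x = p) :
    deriv (fun s => G (c s)) x = fderiv ℝ G p u := by
  subst hcx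
  exact (hG.hasFDerivAt.comp_hasDerivAt x hc).deriv

lemma INupdate_eq (x : Fin n → ℝ) (a : Fin n) (s : ℝ) :
    Function.update x a s = x + (s - x a) • (Pi.single a 1 : Fin n → ℝ) := by
  funext i
  rcases eq_or_ne i a with rfl | h
  · simp
  · simp [Function.update_of_ne h, Pi.single_eq_of_ne h]

lemma INpT_eq (H : ℝ → (Fin n → ℝ) → (Fin n → ℝ) → ℝ) (t : ℝ) (q v : Fin n → ℝ)
    (hH : DifferentiableAt ℝ (INunc H) (t, q, v)) :
    pT H t q v = fderiv ℝ (INunc H) (t, q, v) (1, 0, 0) := by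
  have hc : HasDerivAt (fun s : ℝ => ((s, q, v) : ℝ × (Fin n → ℝ) × (Fin n → ℝ)))
      ((1, 0, 0) : ℝ × (Fin n → ℝ) × (Fin n → ℝ)) t := by
    have : (fun s : ℝ => ((s, q, v) : ℝ × (Fin n → ℝ) × (Fin n → ℝ)))
        = fun s => ((t, q, v) : ℝ × (Fin n → ℝ) × (Fin n → ℝ))
          + (s - t) • ((1, 0, 0) : ℝ × (Fin n → ℝ) × (Fin n → ℝ)) := by
      funext s
      refine Prod.ext ?_ (Prod.ext ?_ ?_) <;> simp
    rw [this]
    exact INaffine _ _ _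
  exact INderiv_comp (INunc H) (t, q, v) hH hc rfl

lemma INpQ_eq (H : ℝ → (Fin n → ℝ) → (Fin n → ℝ) → ℝ) (a : Fin n) (t : ℝ) (q v : Fin n → ℝ)
    (hH : DifferentiableAt ℝ (INunc H) (t, q, v)) :
    pQ H a t q v = fderiv ℝ (INunc H) (t, q, v) (0, Pi.single a 1, 0) := by
  have hc : HasDerivAt (fun s : ℝ => ((t, Function.update q a s, v) : ℝ × (Fin n → ℝ) × (Fin n → ℝ)))
      ((0, Pi.single a 1, 0) : ℝ × (Fin n → ℝ) × (Fin n → ℝ)) (q a) := by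
    have : (fun s : ℝ => ((t, Function.update q a s, v) : ℝ × (Fin n → ℝ) × (Fin n → ℝ)))
        = fun s => ((t, q, v) : ℝ × (Fin n → ℝ) × (Fin n → ℝ))
          + (s - q a) • ((0, Pi.single a 1, 0) : ℝ × (Fin n → ℝ) × (Fin n → ℝ)) := by
      funext s
      rw [INupdate_eq]
      refine Prod.ext ?_ (Prod.ext ?_ ?_) <;> simp
    rw [this]
    exact INaffine _ _ _
  exact INderiv_comp (INunc H) (t, q, v) hH hc (by simp)

lemma INpV_eq (H : ℝ → (Fin n → ℝ) → (Fin n → ℝ) → ℝ) (a : Fin n) (t : ℝ) (q v : Fin n → ℝ)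
    (hH : DifferentiableAt ℝ (INunc H) (t, q, v)) :
    pV H a t q v = fderiv ℝ (INunc H) (t, q, v) (0, 0, Pi.single a 1) := by
  have hc : HasDerivAt (fun s : ℝ => ((t, q, Function.update v a s) : ℝ × (Fin n → ℝ) × (Fin n → ℝ)))
      ((0, 0, Pi.single a 1) : ℝ × (Fin n → ℝ) × (Fin n → ℝ)) (v a) := by
    have : (fun s : ℝ => ((t, q, Function.update v a s) : ℝ × (Fin n → ℝ) × (Fin n → ℝ)))
        = fun s => ((t, q, v) : ℝ × (Fin n → ℝ) × (Fin n → ℝ))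
          + (s - v a) • ((0, 0, Pi.single a 1) : ℝ × (Fin n → ℝ) × (Fin n → ℝ)) := by
      funext s
      rw [INupdate_eq]
      refine Prod.ext ?_ (Prod.ext ?_ ?_) <;> simp
    rw [this]
    exact INaffine _ _ _
  exact INderiv_comp (INunc H) (t, q, v) hH hc (by simp)


lemma INGam_eq (ω : Fin n → ℝ → (Fin n → ℝ) → (Fin n → ℝ) → ℝ)
    (H : ℝ → (Fin n → ℝ) → (Fin n → ℝ) → ℝ) (t : ℝ) (q v : Fin n → ℝ)
    (hH : DifferentiableAt ℝ (INunc H) (t, q, v)) :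
    Gam ω H t q v = fderiv ℝ (INunc H) (t, q, v) (1, v, fun a => ω a t q v) := by
  have hw : ((1, v, fun a => ω a t q v) : ℝ × (Fin n → ℝ) × (Fin n → ℝ))
      = (1, 0, 0) + (∑ a, v a • ((0, Pi.single a 1, 0) : ℝ × (Fin n → ℝ) × (Fin n → ℝ)))
        + ∑ a, ω a t q v • ((0, 0, Pi.single a 1) : ℝ × (Fin n → ℝ) × (Fin n → ℝ)) := by
    refine Prod.ext ?_ (Prod.ext ?_ ?_)
    · simp [Prod.fst_sum]
    · simp only [Prod.snd_sum, Prod.fst_sum, Prod.mk_add_mk, Prod.fst_add, Prod.snd_add,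
        Prod.smul_mk]
      funext i
      simp [Finset.sum_apply, Pi.single_apply]
    · simp only [Prod.snd_sum, Prod.fst_sum, Prod.mk_add_mk, Prod.fst_add, Prod.snd_add,
        Prod.smul_mk]
      funext i
      simp [Finset.sum_apply, Pi.single_apply]
  rw [hw]
  simp only [map_add, map_sum, map_smul, smul_eq_mul]
  rw [Gam, INpT_eq H t q v hH]
  congr 1
  · congr 1
    exact Finset.sum_congr rfl fun a _ => by rw [INpQ_eq H a t q v hH]
  · exact Finset.sum_congr rfl fun a _ => by rw [INpV_eq H a t q v hH]

lemma INsmooth_fderiv_apply (G : ℝ × (Fin n → ℝ) × (Fin n → ℝ) → ℝ)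
    (hG : ContDiff ℝ (⊤ : ℕ∞) G) (u : ℝ × (Fin n → ℝ) × (Fin n → ℝ)) :
    ContDiff ℝ (⊤ : ℕ∞) (fun p => fderiv ℝ G p u) :=
  (hG.fderiv_right (by simp)).clm_apply contDiff_const

lemma INunc_pV (H : ℝ → (Fin n → ℝ) → (Fin n → ℝ) → ℝ) (hH : ContDiff ℝ (⊤ : ℕ∞) (INunc H)) (a : Fin n) :
    INunc (pV H a) = fun p => fderiv ℝ (INunc H) p
      ((0, 0, Pi.single a 1) : ℝ × (Fin n → ℝ) × (Fin n → ℝ)) := by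
  funext p
  exact INpV_eq H a p.1 p.2.1 p.2.2 (hH.differentiable (by simp) _)

lemma INsmooth_pV (H : ℝ → (Fin n → ℝ) → (Fin n → ℝ) → ℝ) (hH : ContDiff ℝ (⊤ : ℕ∞) (INunc H))
    (a : Fin n) : ContDiff ℝ (⊤ : ℕ∞) (INunc (pV H a)) := by
  rw [INunc_pV H hH a]
  exact INsmooth_fderiv_apply _ hH _

lemma INpVpV_symm (L : ℝ → (Fin n → ℝ) → (Fin n → ℝ) → ℝ) (hL : ContDiff ℝ (⊤ : ℕ∞) (INunc L))
    (a b : Fin n) (t : ℝ) (q v : Fin n → ℝ) :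
    pV (pV L a) b t q v = pV (pV L b) a t q v := by
  have hdiff : Differentiable ℝ (INunc L) := hL.differentiable (by simp)
  have hd1 : ContDiff ℝ (⊤ : ℕ∞) (fderiv ℝ (INunc L)) := hL.fderiv_right (by simp)
  have key : ∀ (a b : Fin n), pV (pV L a) b t q v
      = fderiv ℝ (fderiv ℝ (INunc L)) (t, q, v)
          ((0, 0, Pi.single b 1) : ℝ × (Fin n → ℝ) × (Fin n → ℝ))
          ((0, 0, Pi.single a 1) : ℝ × (Fin n → ℝ) × (Fin n → ℝ)) := by
    intro a b
    rw [INpV_eq (pV L a) b t q v ((INsmooth_pV L hL a).differentiable (by simp) _)]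
    rw [INunc_pV L hL a]
    rw [fderiv_clm_apply ((hd1.differentiable (by simp)) _) (differentiableAt_const _)]
    simp
  rw [key a b, key b a]
  exact second_derivative_symmetric (fun y => (hdiff y).hasFDerivAt)
    ((hd1.differentiable (by simp) _).hasFDerivAt) _ _


variable {ω : Fin n → ℝ → (Fin n → ℝ) → (Fin n → ℝ) → ℝ}

lemma INGam_add {G K GK : ℝ → (Fin n → ℝ) → (Fin n → ℝ) → ℝ}
    (hGK : GK = fun t q v => G t q v + K t q v) (t : ℝ) (q v : Fin n → ℝ)
    (hG : DifferentiableAt ℝ (INunc G) (t, q, v))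
    (hK : DifferentiableAt ℝ (INunc K) (t, q, v)) :
    Gam ω GK t q v = Gam ω G t q v + Gam ω K t q v := by
  subst hGK
  rw [INGam_eq ω _ t q v (by exact hG.add hK), INGam_eq ω G t q v hG, INGam_eq ω K t q v hK]
  rw [show INunc (fun t q v => G t q v + K t q v) = fun p => INunc G p + INunc K p from rfl,
    fderiv_fun_add hG hK]
  simp

lemma INGam_sub {G K GK : ℝ → (Fin n → ℝ) → (Fin n → ℝ) → ℝ}
    (hGK : GK = fun t q v => G t q v - K t q v) (t : ℝ) (q v : Fin n → ℝ)
    (hG : DifferentiableAt ℝ (INunc G) (t, q, v))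
    (hK : DifferentiableAt ℝ (INunc K) (t, q, v)) :
    Gam ω GK t q v = Gam ω G t q v - Gam ω K t q v := by
  subst hGK
  rw [INGam_eq ω _ t q v (by exact hG.sub hK), INGam_eq ω G t q v hG, INGam_eq ω K t q v hK]
  rw [show INunc (fun t q v => G t q v - K t q v) = fun p => INunc G p - INunc K p from rfl,
    fderiv_fun_sub hG hK]
  simp

lemma INGam_neg {G GK : ℝ → (Fin n → ℝ) → (Fin n → ℝ) → ℝ}
    (hGK : GK = fun t q v => -G t q v) (t : ℝ) (q v : Fin n → ℝ)
    (hG : DifferentiableAt ℝ (INunc G) (t, q, v)) :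
    Gam ω GK t q v = -Gam ω G t q v := by
  subst hGK
  rw [INGam_eq ω _ t q v (by exact hG.neg), INGam_eq ω G t q v hG]
  rw [show INunc (fun t q v => -G t q v) = fun p => -INunc G p from rfl, fderiv_fun_neg]
  simp

lemma INGam_mul {G K GK : ℝ → (Fin n → ℝ) → (Fin n → ℝ) → ℝ}
    (hGK : GK = fun t q v => G t q v * K t q v) (t : ℝ) (q v : Fin n → ℝ)
    (hG : DifferentiableAt ℝ (INunc G) (t, q, v))
    (hK : DifferentiableAt ℝ (INunc K) (t, q, v)) :
    Gam ω GK t q v = G t q v * Gam ω K t q v + K t q v * Gam ω G t q v := by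
  subst hGK
  rw [INGam_eq ω _ t q v (by exact hG.mul hK), INGam_eq ω G t q v hG, INGam_eq ω K t q v hK]
  rw [show INunc (fun t q v => G t q v * K t q v) = fun p => INunc G p * INunc K p from rfl,
    fderiv_fun_mul hG hK]
  simp [INunc]

lemma INGam_sum {g : Fin n → ℝ → (Fin n → ℝ) → (Fin n → ℝ) → ℝ}
    {GK : ℝ → (Fin n → ℝ) → (Fin n → ℝ) → ℝ}
    (hGK : GK = fun t q v => ∑ i, g i t q v) (t : ℝ) (q v : Fin n → ℝ)
    (hg : ∀ i, DifferentiableAt ℝ (INunc (g i)) (t, q, v)) :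
    Gam ω GK t q v = ∑ i, Gam ω (g i) t q v := by
  subst hGK
  rw [INGam_eq ω _ t q v (by exact DifferentiableAt.fun_sum fun i _ => hg i)]
  rw [show INunc (fun t q v => ∑ i, g i t q v) = fun p => ∑ i, INunc (g i) p from rfl,
    fderiv_fun_sum fun i _ => hg i]
  rw [ContinuousLinearMap.sum_apply]
  exact Finset.sum_congr rfl fun i _ => (INGam_eq ω (g i) t q v (hg i)).symm

lemma INsmooth_coord (a : Fin n) :
    ContDiff ℝ (⊤ : ℕ∞) (INunc (fun (_ : ℝ) (_ : Fin n → ℝ) (w : Fin n → ℝ) => w a)) :=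
  ((ContinuousLinearMap.proj a).comp
    ((ContinuousLinearMap.snd ℝ (Fin n → ℝ) (Fin n → ℝ)).comp
      (ContinuousLinearMap.snd ℝ ℝ ((Fin n → ℝ) × (Fin n → ℝ))))).contDiff

lemma INGam_coord (a : Fin n) (t : ℝ) (q v : Fin n → ℝ) :
    Gam ω (fun (_ : ℝ) (_ : Fin n → ℝ) (w : Fin n → ℝ) => w a) t q v = ω a t q v := by
  have h3 : ∀ c, pV (fun (_ : ℝ) (_ : Fin n → ℝ) (w : Fin n → ℝ) => w a) c t q v
      = (if c = a then (1 : ℝ) else 0) := by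
    intro c
    rcases eq_or_ne c a with rfl | h
    · simp [pV]
    · simp [pV, Function.update_apply, if_neg (Ne.symm h), if_neg h]
  rw [Gam]
  simp [pT, pQ, h3, Finset.sum_ite_eq', mul_ite]

end InverseNoetherAux

noncomputable def INμ {n : ℕ} (γinv : Fin n → Fin n → ℝ → (Fin n → ℝ) → (Fin n → ℝ) → ℝ)
    (Λ : ℝ → (Fin n → ℝ) → (Fin n → ℝ) → ℝ) (a : Fin n)
    (t : ℝ) (q v : Fin n → ℝ) : ℝ :=
  ∑ b, γinv a b t q v * pV Λ b t q v

/-- **Inverse Noether theorem** for regular holonomic Lagrangian systems with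
generalized forces: every first integral `Λ` arises from a weak Noether symmetry
`(ξ, η^a, φ^a, f)`. -/
theorem inverse_noether_theorem
    (n : ℕ) (hn : 1 ≤ n)
    (L Λ f : ℝ → (Fin n → ℝ) → (Fin n → ℝ) → ℝ)
    (F φ : Fin n → ℝ → (Fin n → ℝ) → (Fin n → ℝ) → ℝ)
    (γinv : Fin n → Fin n → ℝ → (Fin n → ℝ) → (Fin n → ℝ) → ℝ)
    (ω : Fin n → ℝ → (Fin n → ℝ) → (Fin n → ℝ) → ℝ)
    (ξ : ℝ → (Fin n → ℝ) → (Fin n → ℝ) → ℝ)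
    (η : Fin n → ℝ → (Fin n → ℝ) → (Fin n → ℝ) → ℝ)
    -- smoothness of the data
    (hL : ContDiff ℝ (⊤ : ℕ∞) (fun p : ℝ × (Fin n → ℝ) × (Fin n → ℝ) => L p.1 p.2.1 p.2.2))
    (hLne : ∀ t q v, L t q v ≠ 0)
    (hΛ : ContDiff ℝ (⊤ : ℕ∞) (fun p : ℝ × (Fin n → ℝ) × (Fin n → ℝ) => Λ p.1 p.2.1 p.2.2))
    (hf : ContDiff ℝ (⊤ : ℕ∞) (fun p : ℝ × (Fin n → ℝ) × (Fin n → ℝ) => f p.1 p.2.1 p.2.2))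
    (hF : ∀ a, ContDiff ℝ (⊤ : ℕ∞) (fun p : ℝ × (Fin n → ℝ) × (Fin n → ℝ) => F a p.1 p.2.1 p.2.2))
    (hφ : ∀ a, ContDiff ℝ (⊤ : ℕ∞) (fun p : ℝ × (Fin n → ℝ) × (Fin n → ℝ) => φ a p.1 p.2.1 p.2.2))
    (hγ : ∀ a b, ContDiff ℝ (⊤ : ℕ∞) (fun p : ℝ × (Fin n → ℝ) × (Fin n → ℝ) => γinv a b p.1 p.2.1 p.2.2))
    -- regularity: `γinv` is the two-sided inverse of the Hessian `γ_{ab} = ∂²L/∂v^a∂v^b`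
    (hinv₁ : ∀ t q v a b,
      ∑ c, γinv a c t q v * pV (pV L b) c t q v = if a = b then (1 : ℝ) else 0)
    (hinv₂ : ∀ t q v a b,
      ∑ c, pV (pV L c) a t q v * γinv c b t q v = if a = b then (1 : ℝ) else 0)
    -- the dynamics: `ω^a = γ^{ab}(F_b + ∂L/∂q^b − ∂²L/∂t∂v^b − (∂²L/∂v^b∂q^c) v^c)`
    (hω : ∀ a t q v, ω a t q v =
      ∑ b, γinv a b t q v *
        (F b t q v + pQ L b t q v - pT (pV L b) t q v - ∑ c, pQ (pV L b) c t q v * v c))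
    -- `Λ` is a first integral: `ΓΛ = 0` identically
    (hint : ∀ t q v, Gam ω Λ t q v = 0)
    -- `ξ = (1/L)(f − Λ + γ^{ab} (∂L/∂v^a)(∂Λ/∂v^b))`
    (hξ : ∀ t q v, ξ t q v = (1 / L t q v) *
      (f t q v - Λ t q v + ∑ a, ∑ b, γinv a b t q v * pV L a t q v * pV Λ b t q v))
    -- `η^a = −γ^{ab} ∂Λ/∂v^b + ξ v^a`
    (hη : ∀ a t q v, η a t q v = -(∑ b, γinv a b t q v * pV Λ b t q v) + ξ t q v * v a)
    -- `φ^a ∂L/∂v^a = −γ^{ab} F_b ∂Λ/∂v^a`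
    (hφc : ∀ t q v, ∑ a, φ a t q v * pV L a t q v =
      -(∑ a, (∑ b, γinv a b t q v * F b t q v) * pV Λ a t q v)) :
    -- the weak Noether condition holds identically
    ∀ t q v,
      ξ t q v * pT L t q v + (∑ a, η a t q v * pQ L a t q v)
        + (∑ a, (Gam ω (η a) t q v - v a * Gam ω ξ t q v + φ a t q v) * pV L a t q v)
        + L t q v * Gam ω ξ t q v
      = Gam ω f t q v := by
  intro t q v
  -- smoothness facts
  have hLs : ContDiff ℝ (⊤ : ℕ∞) (INunc L) := hL
  have hΛs : ContDiff ℝ (⊤ : ℕ∞) (INunc Λ) := hΛ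
  have hfs : ContDiff ℝ (⊤ : ℕ∞) (INunc f) := hf
  have hPs : ∀ a, ContDiff ℝ (⊤ : ℕ∞) (INunc (pV L a)) := INsmooth_pV L hLs
  have hΛvs : ∀ a, ContDiff ℝ (⊤ : ℕ∞) (INunc (pV Λ a)) := INsmooth_pV Λ hΛs
  have hμs : ∀ a, ContDiff ℝ (⊤ : ℕ∞) (INunc (INμ γinv Λ a)) := by
    intro a
    have : INunc (INμ γinv Λ a)
        = fun p => ∑ b, INunc (γinv a b) p * INunc (pV Λ b) p := rfl
    rw [this]
    exact ContDiff.sum fun b _ => (hγ a b).mul (hΛvs b)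
  have dAt : ∀ {G : ℝ → (Fin n → ℝ) → (Fin n → ℝ) → ℝ},
      ContDiff ℝ (⊤ : ℕ∞) (INunc G) → DifferentiableAt ℝ (INunc G) (t, q, v) :=
    fun h => h.differentiable (by simp) _
  -- transforming the sum in ξ
  have hSμ : ∀ t q v, (∑ a, ∑ b, γinv a b t q v * pV L a t q v * pV Λ b t q v)
      = ∑ a, INμ γinv Λ a t q v * pV L a t q v := by
    intro t q v
    refine Finset.sum_congr rfl fun a _ => ?_
    simp only [INμ]
    rw [Finset.sum_mul]
    exact Finset.sum_congr rfl fun b _ => by ring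
  have hξf : ξ = fun t q v => 1 / L t q v *
      (f t q v - Λ t q v + ∑ a, INμ γinv Λ a t q v * pV L a t q v) := by
    funext t q v
    rw [hξ t q v, hSμ t q v]
  have hξs : ContDiff ℝ (⊤ : ℕ∞) (INunc ξ) := by
    rw [hξf]
    have : INunc (fun t q v => 1 / L t q v *
        (f t q v - Λ t q v + ∑ a, INμ γinv Λ a t q v * pV L a t q v))
        = fun p => 1 / INunc L p *
          (INunc f p - INunc Λ p + ∑ a, INunc (INμ γinv Λ a) p * INunc (pV L a) p) := rfl
    rw [this]
    exact (contDiff_const.div hLs fun p => hLne p.1 p.2.1 p.2.2).mul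
      ((hfs.sub hΛs).add (ContDiff.sum fun a _ => (hμs a).mul (hPs a)))
  have hηf : ∀ a, η a = fun t q v => -INμ γinv Λ a t q v + ξ t q v * v a := by
    intro a; funext t q v; exact hη a t q v
  -- symmetry of γinv
  have hγsymm : ∀ a b, γinv a b t q v = γinv b a t q v := by
    intro a b
    set A : Matrix (Fin n) (Fin n) ℝ := Matrix.of fun i j => γinv i j t q v with hA
    set Hm : Matrix (Fin n) (Fin n) ℝ := Matrix.of fun i j => pV (pV L j) i t q v with hHm
    have hAH : A * Hm = 1 := by
      ext i j
      rw [Matrix.mul_apply]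
      simpa [hA, hHm, Matrix.one_apply] using hinv₁ t q v i j
    have hHA : Hm * A = 1 := by
      ext i j
      rw [Matrix.mul_apply]
      simpa [hA, hHm, Matrix.one_apply] using hinv₂ t q v i j
    have hHs : Hm.transpose = Hm := by
      ext i j
      simp only [Matrix.transpose_apply, hHm, Matrix.of_apply]
      exact INpVpV_symm L hLs i j t q v
    have hAt : A.transpose = A := by
      have h1 : A.transpose * Hm = 1 := by
        calc A.transpose * Hm = (Hm * A).transpose := by rw [Matrix.transpose_mul, hHs]
          _ = 1 := by rw [hHA, Matrix.transpose_one]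
      calc A.transpose = A.transpose * (Hm * A) := by rw [hHA, Matrix.mul_one]
        _ = A.transpose * Hm * A := by rw [Matrix.mul_assoc]
        _ = A := by rw [h1, Matrix.one_mul]
    have := congrFun (congrFun hAt b) a
    simpa [hA, Matrix.transpose_apply, Matrix.of_apply] using this
  -- Euler-Lagrange equations hold along the dynamics
  have hEL : ∀ a, Gam ω (pV L a) t q v = F a t q v + pQ L a t q v := by
    intro a
    have step : ∑ b, ω b t q v * pV (pV L a) b t q v
        = F a t q v + pQ L a t q v - pT (pV L a) t q v
          - ∑ d, pQ (pV L a) d t q v * v d := by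
      calc ∑ b, ω b t q v * pV (pV L a) b t q v
          = ∑ b, ∑ c, γinv b c t q v * (F c t q v + pQ L c t q v - pT (pV L c) t q v
              - ∑ d, pQ (pV L c) d t q v * v d) * pV (pV L b) a t q v := by
            refine Finset.sum_congr rfl fun b _ => ?_
            rw [INpVpV_symm L hLs a b t q v, hω b t q v, Finset.sum_mul]
        _ = ∑ c, ∑ b, γinv b c t q v * (F c t q v + pQ L c t q v - pT (pV L c) t q v
              - ∑ d, pQ (pV L c) d t q v * v d) * pV (pV L b) a t q v := Finset.sum_comm
        _ = ∑ c, (F c t q v + pQ L c t q v - pT (pV L c) t q v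
              - ∑ d, pQ (pV L c) d t q v * v d) * ∑ b, pV (pV L b) a t q v * γinv b c t q v := by
            refine Finset.sum_congr rfl fun c _ => ?_
            rw [Finset.mul_sum]
            exact Finset.sum_congr rfl fun b _ => by ring
        _ = ∑ c, (F c t q v + pQ L c t q v - pT (pV L c) t q v
              - ∑ d, pQ (pV L c) d t q v * v d) * (if a = c then (1:ℝ) else 0) := by
            refine Finset.sum_congr rfl fun c _ => ?_
            rw [hinv₂ t q v a c]
        _ = F a t q v + pQ L a t q v - pT (pV L a) t q v
              - ∑ d, pQ (pV L a) d t q v * v d := by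
            rw [Finset.sum_congr rfl fun c _ => (mul_ite _ _ _ _ : _ = ite _ _ _)]
            simp [Finset.sum_ite_eq]
    have hc2 : ∑ d, pQ (pV L a) d t q v * v d = ∑ d, v d * pQ (pV L a) d t q v :=
      Finset.sum_congr rfl fun d _ => mul_comm _ _
    have hGam : Gam ω (pV L a) t q v
        = pT (pV L a) t q v + ∑ c, v c * pQ (pV L a) c t q v
          + ∑ b, ω b t q v * pV (pV L a) b t q v := rfl
    rw [hGam, step, hc2]
    ring
  -- Gam of η a
  have hGη : ∀ a, Gam ω (η a) t q v
      = -Gam ω (INμ γinv Λ a) t q v + (ξ t q v * ω a t q v + v a * Gam ω ξ t q v) := by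
    intro a
    have e0 : Gam ω (η a) t q v
        = Gam ω (fun t q v => -INμ γinv Λ a t q v) t q v
          + Gam ω (fun t q v => ξ t q v * v a) t q v :=
      INGam_add (hηf a) t q v (by exact (dAt (hμs a)).neg)
        (by exact (dAt hξs).mul (dAt (INsmooth_coord a)))
    have e1 : Gam ω (fun t q v => -INμ γinv Λ a t q v) t q v
        = -Gam ω (INμ γinv Λ a) t q v := INGam_neg rfl t q v (dAt (hμs a))
    have e2 : Gam ω (fun t q v => ξ t q v * v a) t q v
        = ξ t q v * Gam ω (fun (_ : ℝ) (_ : Fin n → ℝ) (w : Fin n → ℝ) => w a) t q v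
          + v a * Gam ω ξ t q v :=
      INGam_mul rfl t q v (dAt hξs) (dAt (INsmooth_coord a))
    rw [e0, e1, e2, INGam_coord a t q v]
  -- the product identity
  have hξL : (fun t q v => ξ t q v * L t q v)
      = fun t q v => f t q v - Λ t q v + ∑ a, INμ γinv Λ a t q v * pV L a t q v := by
    funext t q v
    rw [hξ t q v, hSμ t q v]
    field_simp
    exact mul_div_cancel_left₀ _ (hLne t q v)
  have eProd : Gam ω (fun t q v => ξ t q v * L t q v) t q v
      = ξ t q v * Gam ω L t q v + L t q v * Gam ω ξ t q v :=
    INGam_mul rfl t q v (dAt hξs) (dAt hLs)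
  have eSum : Gam ω (fun t q v => f t q v - Λ t q v
        + ∑ a, INμ γinv Λ a t q v * pV L a t q v) t q v
      = (Gam ω f t q v - Gam ω Λ t q v)
        + ∑ a, (INμ γinv Λ a t q v * Gam ω (pV L a) t q v
            + pV L a t q v * Gam ω (INμ γinv Λ a) t q v) := by
    have e1 : Gam ω (fun t q v => f t q v - Λ t q v
          + ∑ a, INμ γinv Λ a t q v * pV L a t q v) t q v
        = Gam ω (fun t q v => f t q v - Λ t q v) t q v
          + Gam ω (fun t q v => ∑ a, INμ γinv Λ a t q v * pV L a t q v) t q v :=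
      INGam_add rfl t q v (by exact (dAt hfs).sub (dAt hΛs))
        (by exact DifferentiableAt.fun_sum fun a _ => (dAt (hμs a)).mul (dAt (hPs a)))
    have e2 : Gam ω (fun t q v => f t q v - Λ t q v) t q v
        = Gam ω f t q v - Gam ω Λ t q v := INGam_sub rfl t q v (dAt hfs) (dAt hΛs)
    have e3 : Gam ω (fun t q v => ∑ a, INμ γinv Λ a t q v * pV L a t q v) t q v
        = ∑ a, Gam ω (fun t q v => INμ γinv Λ a t q v * pV L a t q v) t q v :=
      INGam_sum rfl t q v fun a => by exact (dAt (hμs a)).mul (dAt (hPs a))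
    have e4 : ∀ a, Gam ω (fun t q v => INμ γinv Λ a t q v * pV L a t q v) t q v
        = INμ γinv Λ a t q v * Gam ω (pV L a) t q v
          + pV L a t q v * Gam ω (INμ γinv Λ a) t q v :=
      fun a => INGam_mul rfl t q v (dAt (hμs a)) (dAt (hPs a))
    rw [e1, e2, e3]
    congr 1
    exact Finset.sum_congr rfl fun a _ => e4 a
  have hprod2 : ξ t q v * Gam ω L t q v + L t q v * Gam ω ξ t q v
      = Gam ω f t q v + ∑ a, (INμ γinv Λ a t q v * (F a t q v + pQ L a t q v)
          + pV L a t q v * Gam ω (INμ γinv Λ a) t q v) := by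
    rw [← eProd, hξL, eSum, hint t q v, sub_zero]
    congr 1
    exact Finset.sum_congr rfl fun a _ => by rw [hEL a]
  -- rewriting the two sums in the goal
  have g1 : (∑ a, η a t q v * pQ L a t q v)
      = -(∑ a, INμ γinv Λ a t q v * pQ L a t q v)
        + ξ t q v * ∑ a, v a * pQ L a t q v := by
    rw [show (∑ a, η a t q v * pQ L a t q v)
        = ∑ a, (-(INμ γinv Λ a t q v * pQ L a t q v)
            + ξ t q v * (v a * pQ L a t q v)) from
      Finset.sum_congr rfl fun a _ => by
        rw [hη a t q v]; simp only [INμ]; ring]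
    rw [Finset.sum_add_distrib, Finset.sum_neg_distrib, ← Finset.mul_sum]
  have g2 : (∑ a, (Gam ω (η a) t q v - v a * Gam ω ξ t q v + φ a t q v) * pV L a t q v)
      = -(∑ a, Gam ω (INμ γinv Λ a) t q v * pV L a t q v)
        + ξ t q v * ∑ a, ω a t q v * pV L a t q v
        + ∑ a, φ a t q v * pV L a t q v := by
    rw [show (∑ a, (Gam ω (η a) t q v - v a * Gam ω ξ t q v + φ a t q v) * pV L a t q v)
        = ∑ a, (-(Gam ω (INμ γinv Λ a) t q v * pV L a t q v)
            + ξ t q v * (ω a t q v * pV L a t q v) + φ a t q v * pV L a t q v) from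
      Finset.sum_congr rfl fun a _ => by rw [hGη a]; ring]
    rw [Finset.sum_add_distrib, Finset.sum_add_distrib, Finset.sum_neg_distrib,
      ← Finset.mul_sum]
  -- the force identity
  have g3 : ∑ a, INμ γinv Λ a t q v * F a t q v = -(∑ a, φ a t q v * pV L a t q v) := by
    rw [hφc t q v, neg_neg]
    calc ∑ a, INμ γinv Λ a t q v * F a t q v
        = ∑ a, ∑ b, γinv a b t q v * pV Λ b t q v * F a t q v := by
          refine Finset.sum_congr rfl fun a _ => ?_
          simp only [INμ]
          rw [Finset.sum_mul]
      _ = ∑ b, ∑ a, γinv a b t q v * pV Λ b t q v * F a t q v := Finset.sum_comm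
      _ = ∑ a, ∑ b, γinv b a t q v * pV Λ a t q v * F b t q v := rfl
      _ = ∑ a, ∑ b, γinv a b t q v * F b t q v * pV Λ a t q v :=
          Finset.sum_congr rfl fun a _ => Finset.sum_congr rfl fun b _ => by
            rw [hγsymm b a]; ring
      _ = ∑ a, (∑ b, γinv a b t q v * F b t q v) * pV Λ a t q v :=
          Finset.sum_congr rfl fun a _ => (Finset.sum_mul _ _ _).symm
  -- final assembly
  have hGamL : Gam ω L t q v = pT L t q v + ∑ a, v a * pQ L a t q v
      + ∑ a, ω a t q v * pV L a t q v := rfl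
  have hsplit : ∑ a, (INμ γinv Λ a t q v * (F a t q v + pQ L a t q v)
        + pV L a t q v * Gam ω (INμ γinv Λ a) t q v)
      = ∑ a, INμ γinv Λ a t q v * F a t q v
        + ∑ a, INμ γinv Λ a t q v * pQ L a t q v
        + ∑ a, Gam ω (INμ γinv Λ a) t q v * pV L a t q v := by
    rw [← Finset.sum_add_distrib, ← Finset.sum_add_distrib]
    exact Finset.sum_congr rfl fun a _ => by ring
  rw [hGamL, hsplit] at hprod2
  rw [g1, g2]
  linear_combination hprod2 + g3
end

section
/- Let n ≥ 1, let L : ℝ × ℝⁿ × ℝⁿ → ℝ be a smooth regular Lagrangian and F_a(t,q,v) smooth generalized forces, and suppose Λ : ℝ × ℝⁿ × ℝⁿ → ℝ is a smooth first integral (ΓΛ = 0 identically). Set ξ = 0, η^a = −γ^{ab} ∂Λ/∂v^b, f = Λ + η^a ∂L/∂v^a, and let φ^a(t,q,v) be any smooth functions satisfying φ^a ∂L/∂v^a = −γ^{ab} F_b ∂Λ/∂v^a identically. Then the gauged (ξ = 0) weak Noether condition η^a ∂L/∂q^a + (Γη^a + φ^a) ∂L/∂v^a = Γf holds identically, and the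 associated Noether integral f − η^a ∂L/∂v^a equals Λ. -/
namespace InvNoether

abbrev E (n : ℕ) := ℝ × (Fin n → ℝ) × (Fin n → ℝ)

def unc {n : ℕ} (H : ℝ → (Fin n → ℝ) → (Fin n → ℝ) → ℝ) : E n → ℝ :=
  fun p => H p.1 p.2.1 p.2.2

def dT {n : ℕ} : E n := (1, 0, 0)
def dQ {n : ℕ} (a : Fin n) : E n := (0, Pi.single a 1, 0)
def dV {n : ℕ} (a : Fin n) : E n := (0, 0, Pi.single a 1)

variable {n : ℕ} {H : ℝ → (Fin n → ℝ) → (Fin n → ℝ) → ℝ} {t : ℝ} {q v : Fin n → ℝ}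

theorem pT_eq (h : DifferentiableAt ℝ (unc H) (t, q, v)) :
    pT H t q v = fderiv ℝ (unc H) (t, q, v) dT := by
  have hc : HasDerivAt (fun s : ℝ => ((s, q, v) : E n)) dT t :=
    HasDerivAt.prodMk (hasDerivAt_id t) (hasDerivAt_const t (q, v))
  have := h.hasFDerivAt.comp_hasDerivAt t hc
  exact this.deriv

theorem pQ_eq (a : Fin n) (h : DifferentiableAt ℝ (unc H) (t, q, v)) :
    pQ H a t q v = fderiv ℝ (unc H) (t, q, v) (dQ a) := by
  have hc : HasDerivAt (fun s : ℝ => ((t, Function.update q a s, v) : E n)) (dQ a) (q a) := by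
    refine HasDerivAt.prodMk (hasDerivAt_const (q a) t) (HasDerivAt.prodMk ?_ (hasDerivAt_const (q a) v))
    exact hasDerivAt_update q a (q a)
  have h' : HasFDerivAt (unc H) (fderiv ℝ (unc H) (t, q, v))
      (t, Function.update q a (q a), v) := by
    rw [Function.update_eq_self]; exact h.hasFDerivAt
  exact (h'.comp_hasDerivAt (q a) hc).deriv

theorem pV_eq (a : Fin n) (h : DifferentiableAt ℝ (unc H) (t, q, v)) :
    pV H a t q v = fderiv ℝ (unc H) (t, q, v) (dV a) := by
  have hc : HasDerivAt (fun s : ℝ => ((t, q, Function.update v a s) : E n)) (dV a) (v a) := by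
    refine HasDerivAt.prodMk (hasDerivAt_const (v a) t) (HasDerivAt.prodMk (hasDerivAt_const (v a) q) ?_)
    exact hasDerivAt_update v a (v a)
  have h' : HasFDerivAt (unc H) (fderiv ℝ (unc H) (t, q, v))
      (t, q, Function.update v a (v a)) := by
    rw [Function.update_eq_self]; exact h.hasFDerivAt
  exact (h'.comp_hasDerivAt (v a) hc).deriv

theorem gam_eq {ω : Fin n → ℝ → (Fin n → ℝ) → (Fin n → ℝ) → ℝ}
    (h : DifferentiableAt ℝ (unc H) (t, q, v)) :
    Gam ω H t q v = fderiv ℝ (unc H) (t, q, v) (1, v, fun a => ω a t q v) := by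
  have hdecomp : ((1, v, fun a => ω a t q v) : E n)
      = dT + (∑ a, v a • dQ a) + (∑ a, ω a t q v • dV a) := by
    simp only [dT, dQ, dV, Prod.smul_mk, smul_zero]
    refine Prod.ext ?_ (Prod.ext ?_ ?_)
    · simp [Prod.fst_sum]
    · ext i
      simp [Prod.fst_sum, Prod.snd_sum, Finset.sum_apply, Pi.single_apply,
        Finset.sum_ite_eq', smul_eq_mul]
    · ext i
      simp [Prod.fst_sum, Prod.snd_sum, Finset.sum_apply, Pi.single_apply,
        Finset.sum_ite_eq', smul_eq_mul]
  rw [hdecomp]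
  simp only [map_add, map_sum, map_smul]
  rw [Gam, pT_eq h]
  congr 1
  · congr 1
    exact Finset.sum_congr rfl fun a _ => by rw [pQ_eq a h]; simp [smul_eq_mul]
  · exact Finset.sum_congr rfl fun a _ => by rw [pV_eq a h]; simp [smul_eq_mul]

end InvNoether

namespace InvNoether

variable {n : ℕ} {t : ℝ} {q v : Fin n → ℝ}

/-- `∂G/∂v^a` as a function on phase space. -/
noncomputable def Dv (G : E n → ℝ) (a : Fin n) : E n → ℝ :=
  fun p => fderiv ℝ G p (dV a)

theorem contDiff_Dv {G : E n → ℝ} (hG : ContDiff ℝ (⊤ : ℕ∞) G) (a : Fin n) :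
    ContDiff ℝ (⊤ : ℕ∞) (Dv G a) :=
  (hG.fderiv_right (by simp)).clm_apply contDiff_const

theorem unc_pV_eq {H : ℝ → (Fin n → ℝ) → (Fin n → ℝ) → ℝ}
    (h : Differentiable ℝ (unc H)) (a : Fin n) :
    unc (pV H a) = Dv (unc H) a :=
  funext fun p => pV_eq a (h p)

theorem fderiv_Dv {G : E n → ℝ} (hG : ContDiff ℝ (⊤ : ℕ∞) G) (a b : Fin n) (p : E n) :
    fderiv ℝ (Dv G b) p (dV a) = fderiv ℝ (fderiv ℝ G) p (dV a) (dV b) := by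
  have hd : DifferentiableAt ℝ (fderiv ℝ G) p :=
    ((hG.fderiv_right (m := (⊤ : ℕ∞)) (by simp)).differentiable (by simp)) p
  have h := (hd.hasFDerivAt.clm_apply (hasFDerivAt_const (dV b) p)).fderiv
  show fderiv ℝ (fun y => fderiv ℝ G y (dV b)) p (dV a) = _
  rw [h]
  simp

/-- Clairaut's theorem for the `v`-Hessian. -/
theorem pVV_symm {L : ℝ → (Fin n → ℝ) → (Fin n → ℝ) → ℝ}
    (hL : ContDiff ℝ (⊤ : ℕ∞) (unc L)) (a b : Fin n) :
    pV (pV L b) a t q v = pV (pV L a) b t q v := by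
  have hLd : Differentiable ℝ (unc L) := hL.differentiable (by simp)
  have hDv : ∀ c, ContDiff ℝ (⊤ : ℕ∞) (unc (pV L c)) := by
    intro c; rw [unc_pV_eq hLd]; exact contDiff_Dv hL c
  have key : ∀ c d : Fin n, pV (pV L c) d t q v
      = fderiv ℝ (fderiv ℝ (unc L)) (t, q, v) (dV d) (dV c) := by
    intro c d
    rw [pV_eq d ((hDv c).differentiable (by simp) _), unc_pV_eq hLd, fderiv_Dv hL]
  rw [key, key]
  exact (hL.contDiffAt.isSymmSndFDerivAt (by rw [minSmoothness_of_isRCLikeNormedField]; exact WithTop.coe_le_coe.2 le_top)) (dV a) (dV b)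

end InvNoether

/-- **Inverse Noether theorem in the gauge `ξ = 0`**: with `η^a = −γ^{ab} ∂Λ/∂v^b`,
`f = Λ + η^a ∂L/∂v^a` and suitable `φ^a`, the gauged weak Noether condition holds
and the associated Noether integral equals `Λ`. -/
theorem inverse_noether_gauge_zero
    (n : ℕ) (hn : 1 ≤ n)
    (L Λ f : ℝ → (Fin n → ℝ) → (Fin n → ℝ) → ℝ)
    (F φ : Fin n → ℝ → (Fin n → ℝ) → (Fin n → ℝ) → ℝ)
    (γinv : Fin n → Fin n → ℝ → (Fin n → ℝ) → (Fin n → ℝ) → ℝ)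
    (ω : Fin n → ℝ → (Fin n → ℝ) → (Fin n → ℝ) → ℝ)
    (η : Fin n → ℝ → (Fin n → ℝ) → (Fin n → ℝ) → ℝ)
    -- smoothness of the data
    (hL : ContDiff ℝ (⊤ : ℕ∞) (fun p : ℝ × (Fin n → ℝ) × (Fin n → ℝ) => L p.1 p.2.1 p.2.2))
    (hΛ : ContDiff ℝ (⊤ : ℕ∞) (fun p : ℝ × (Fin n → ℝ) × (Fin n → ℝ) => Λ p.1 p.2.1 p.2.2))
    (hF : ∀ a, ContDiff ℝ (⊤ : ℕ∞) (fun p : ℝ × (Fin n → ℝ) × (Fin n → ℝ) => F a p.1 p.2.1 p.2.2))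
    (hφ : ∀ a, ContDiff ℝ (⊤ : ℕ∞) (fun p : ℝ × (Fin n → ℝ) × (Fin n → ℝ) => φ a p.1 p.2.1 p.2.2))
    (hγ : ∀ a b, ContDiff ℝ (⊤ : ℕ∞) (fun p : ℝ × (Fin n → ℝ) × (Fin n → ℝ) => γinv a b p.1 p.2.1 p.2.2))
    -- regularity: `γinv` is the two-sided inverse of the Hessian `γ_{ab} = ∂²L/∂v^a∂v^b`
    (hinv₁ : ∀ t q v a b,
      ∑ c, γinv a c t q v * pV (pV L b) c t q v = if a = b then (1 : ℝ) else 0)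
    (hinv₂ : ∀ t q v a b,
      ∑ c, pV (pV L c) a t q v * γinv c b t q v = if a = b then (1 : ℝ) else 0)
    -- the dynamics: `ω^a = γ^{ab}(F_b + ∂L/∂q^b − ∂²L/∂t∂v^b − (∂²L/∂v^b∂q^c) v^c)`
    (hω : ∀ a t q v, ω a t q v =
      ∑ b, γinv a b t q v *
        (F b t q v + pQ L b t q v - pT (pV L b) t q v - ∑ c, pQ (pV L b) c t q v * v c))
    -- `Λ` is a first integral: `ΓΛ = 0` identically
    (hint : ∀ t q v, Gam ω Λ t q v = 0)
    -- `η^a = −γ^{ab} ∂Λ/∂v^b`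
    (hη : ∀ a t q v, η a t q v = -(∑ b, γinv a b t q v * pV Λ b t q v))
    -- `f = Λ + η^a ∂L/∂v^a`
    (hfdef : ∀ t q v, f t q v = Λ t q v + ∑ a, η a t q v * pV L a t q v)
    -- `φ^a ∂L/∂v^a = −γ^{ab} F_b ∂Λ/∂v^a`
    (hφc : ∀ t q v, ∑ a, φ a t q v * pV L a t q v =
      -(∑ a, (∑ b, γinv a b t q v * F b t q v) * pV Λ a t q v)) :
    -- the gauged (ξ = 0) weak Noether condition holds identically, and the
    -- associated Noether integral `f − η^a ∂L/∂v^a` equals `Λ`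
    (∀ t q v,
      (∑ a, η a t q v * pQ L a t q v)
        + (∑ a, (Gam ω (η a) t q v + φ a t q v) * pV L a t q v)
      = Gam ω f t q v) ∧
    (∀ t q v, f t q v - ∑ a, η a t q v * pV L a t q v = Λ t q v) := by
  classical
  have hLd : Differentiable ℝ (InvNoether.unc L) := hL.differentiable (by simp)
  have hΛd : Differentiable ℝ (InvNoether.unc Λ) := hΛ.differentiable (by simp)
  -- smoothness of pV L a and pV Λ b as functions
  have hLv : ∀ a, ContDiff ℝ (⊤ : ℕ∞) (InvNoether.unc (pV L a)) := fun a => by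
    rw [InvNoether.unc_pV_eq hLd]; exact InvNoether.contDiff_Dv hL a
  have hΛv : ∀ a, ContDiff ℝ (⊤ : ℕ∞) (InvNoether.unc (pV Λ a)) := fun a => by
    rw [InvNoether.unc_pV_eq hΛd]; exact InvNoether.contDiff_Dv hΛ a
  -- smoothness of η
  have hη_eq : ∀ a, InvNoether.unc (η a)
      = fun p => -(∑ b, InvNoether.unc (γinv a b) p * InvNoether.unc (pV Λ b) p) :=
    fun a => funext fun p => hη a p.1 p.2.1 p.2.2
  have hηc : ∀ a, ContDiff ℝ (⊤ : ℕ∞) (InvNoether.unc (η a)) := fun a => by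
    rw [hη_eq a]
    exact (ContDiff.sum fun b _ => (hγ a b).mul (hΛv b)).neg
  have hηd : ∀ a, Differentiable ℝ (InvNoether.unc (η a)) :=
    fun a => (hηc a).differentiable (by simp)
  have hLvd : ∀ a, Differentiable ℝ (InvNoether.unc (pV L a)) :=
    fun a => (hLv a).differentiable (by simp)
  -- f uncurried
  have hf_eq : InvNoether.unc f
      = fun p => InvNoether.unc Λ p
          + ∑ a, InvNoether.unc (η a) p * InvNoether.unc (pV L a) p :=
    funext fun p => hfdef p.1 p.2.1 p.2.2
  constructor
  · intro t q v
    set p : InvNoether.E n := (t, q, v) with hp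
    set vec : InvNoether.E n := (1, v, fun a => ω a t q v) with hvec
    -- Euler-Lagrange identity: Γ(∂L/∂v^a) = F_a + ∂L/∂q^a
    have hGamPV : ∀ a, Gam ω (pV L a) t q v = F a t q v + pQ L a t q v := by
      intro a
      have h3 : ∑ b, ω b t q v * pV (pV L a) b t q v
          = F a t q v + pQ L a t q v - pT (pV L a) t q v
            - ∑ c, pQ (pV L a) c t q v * v c := by
        calc ∑ b, ω b t q v * pV (pV L a) b t q v
            = ∑ b, ∑ c, pV (pV L b) a t q v * γinv b c t q v *
                (F c t q v + pQ L c t q v - pT (pV L c) t q v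
                  - ∑ d, pQ (pV L c) d t q v * v d) := by
              refine Finset.sum_congr rfl fun b _ => ?_
              rw [hω b, InvNoether.pVV_symm hL a b, Finset.sum_mul]
              refine Finset.sum_congr rfl fun c _ => by ring
          _ = ∑ c, (∑ b, pV (pV L b) a t q v * γinv b c t q v) *
                (F c t q v + pQ L c t q v - pT (pV L c) t q v
                  - ∑ d, pQ (pV L c) d t q v * v d) := by
              rw [Finset.sum_comm]
              exact Finset.sum_congr rfl fun c _ => by rw [Finset.sum_mul]
          _ = ∑ c, (if a = c then (1:ℝ) else 0) *
                (F c t q v + pQ L c t q v - pT (pV L c) t q v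
                  - ∑ d, pQ (pV L c) d t q v * v d) := by
              exact Finset.sum_congr rfl fun c _ => by rw [hinv₂ t q v a c]
          _ = _ := by simp
      rw [Gam, h3]
      have hc : ∑ c, v c * pQ (pV L a) c t q v = ∑ c, pQ (pV L a) c t q v * v c :=
        Finset.sum_congr rfl fun c _ => mul_comm _ _
      rw [hc]
      ring
    -- symmetry of the inverse Hessian
    have hγsymm : ∀ a b, γinv a b t q v = γinv b a t q v := by
      intro a b
      calc γinv a b t q v = ∑ c, γinv a c t q v * (if b = c then (1:ℝ) else 0) := by simp
        _ = ∑ c, γinv a c t q v * ∑ d, γinv b d t q v * pV (pV L c) d t q v := by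
            exact Finset.sum_congr rfl fun c _ => by rw [hinv₁ t q v b c]
        _ = ∑ d, γinv b d t q v * ∑ c, γinv a c t q v * pV (pV L d) c t q v := by
            simp_rw [Finset.mul_sum]
            rw [Finset.sum_comm]
            refine Finset.sum_congr rfl fun d _ => Finset.sum_congr rfl fun c _ => ?_
            rw [InvNoether.pVV_symm hL d c]
            ring
        _ = ∑ d, γinv b d t q v * (if a = d then (1:ℝ) else 0) := by
            exact Finset.sum_congr rfl fun d _ => by rw [hinv₁ t q v a d]
        _ = γinv b a t q v := by simp
    -- key identity: φ^a ∂L/∂v^a = η^a F_a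
    have key : ∑ a, φ a t q v * pV L a t q v = ∑ a, η a t q v * F a t q v := by
      rw [hφc t q v]
      have : ∑ a, η a t q v * F a t q v
          = -∑ a, ∑ b, γinv a b t q v * pV Λ b t q v * F a t q v := by
        rw [← Finset.sum_neg_distrib]
        refine Finset.sum_congr rfl fun a _ => ?_
        rw [hη a, neg_mul, Finset.sum_mul]
      rw [this, neg_inj]
      simp_rw [Finset.sum_mul]
      rw [Finset.sum_comm]
      refine Finset.sum_congr rfl fun a _ => Finset.sum_congr rfl fun b _ => ?_
      rw [hγsymm b a]
      ring
    -- compute Γf via the chain rule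
    have hfd : HasFDerivAt (InvNoether.unc f)
        (fderiv ℝ (InvNoether.unc Λ) p
          + ∑ a, (InvNoether.unc (η a) p • fderiv ℝ (InvNoether.unc (pV L a)) p
            + InvNoether.unc (pV L a) p • fderiv ℝ (InvNoether.unc (η a)) p)) p := by
      rw [hf_eq]
      exact (hΛd p).hasFDerivAt.add
        (HasFDerivAt.fun_sum fun a _ => ((hηd a p).hasFDerivAt.mul (hLvd a p).hasFDerivAt))
    have hGamf : Gam ω f t q v
        = Gam ω Λ t q v
          + ∑ a, (η a t q v * Gam ω (pV L a) t q v + pV L a t q v * Gam ω (η a) t q v) := by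
      rw [InvNoether.gam_eq hfd.differentiableAt, hfd.fderiv]
      simp only [ContinuousLinearMap.add_apply, ContinuousLinearMap.coe_sum',
        Finset.sum_apply, ContinuousLinearMap.coe_smul', Pi.smul_apply, smul_eq_mul]
      rw [InvNoether.gam_eq (hΛd p)]
      congr 1
      refine Finset.sum_congr rfl fun a _ => ?_
      rw [InvNoether.gam_eq ((hLvd a) p), InvNoether.gam_eq ((hηd a) p)]
      rfl
    rw [hGamf, hint t q v]
    simp only [hGamPV]
    simp only [add_mul, mul_add, Finset.sum_add_distrib]
    rw [← key]
    have hcomm : ∑ x, pV L x t q v * Gam ω (η x) t q v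
        = ∑ x, Gam ω (η x) t q v * pV L x t q v :=
      Finset.sum_congr rfl fun x _ => mul_comm _ _
    rw [hcomm]
    ring
  · intro t q v
    rw [hfdef t q v]
    ring
end

section
/- Let n ≥ 1, V : ℝⁿ → ℝ smooth, L(t,q,v) = ½ δ_{ab} v^a v^b − V(q), and let F^a(t,q,v) be smooth generalized forces, so that ω^a = −∂V/∂q^a + F^a. Suppose K_{ab}(t,q) (symmetric in a,b), K_a(t,q) and K(t,q) are smooth and Λ(t,q,v) = K_{ab} v^a v^b + K_a v^a + K satisfies ΓΛ = 0 identically (Λ is a quadratic first integral). Let φ_a(t,q,v) be any smooth functions satisfying (φ_a + 2K_{ab}F^b) v^a + K_a F^a = 0 identically. Then with ξ = 0, η_a = −(2K_{ab} v^b + K_a) and gauge function f = −K_{ab} v^a v^b + K, the gauged weak Noether condition η^a ∂L/∂q^a + (Γη^a + φ^a) ∂L/∂v^a = Γf holds identically, and the associated Noether integral f − η^a ∂L/∂v^a equals Λ. -/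
/-- Spatial partial derivative `∂f/∂q^a` of a function `f : ℝⁿ → ℝ`. -/
noncomputable def dS {n : ℕ} (f : (Fin n → ℝ) → ℝ) (a : Fin n) (q : Fin n → ℝ) : ℝ :=
  deriv (fun s => f (Function.update q a s)) (q a)

/-- The Euclidean Lagrangian `L(t,q,v) = ½ δ_{ab} v^a v^b − V(q)`. -/
noncomputable def Leuc {n : ℕ} (V : (Fin n → ℝ) → ℝ) :
    ℝ → (Fin n → ℝ) → (Fin n → ℝ) → ℝ :=
  fun _ q v => (1 / 2) * (∑ a, v a * v a) - V q


noncomputable def dT {n : ℕ} (c : ℝ → (Fin n → ℝ) → ℝ) (t : ℝ) (q : Fin n → ℝ) : ℝ :=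
  deriv (fun s => c s q) t

noncomputable def dQ' {n : ℕ} (c : ℝ → (Fin n → ℝ) → ℝ) (a : Fin n) (t : ℝ) (q : Fin n → ℝ) : ℝ :=
  deriv (fun s => c t (Function.update q a s)) (q a)

lemma sum_eq {n : ℕ} {f g : Fin n → ℝ} (h : ∀ a, f a = g a) : ∑ a, f a = ∑ a, g a :=
  Finset.sum_congr rfl fun a _ => h a

lemma diff_update {n : ℕ} (q : Fin n → ℝ) (a : Fin n) :
    Differentiable ℝ (Function.update q a) := fun y => (hasDerivAt_update q a y).differentiableAt

lemma hasDerivAt_dT {n : ℕ} {c : ℝ → (Fin n → ℝ) → ℝ}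
    (hc : ContDiff ℝ (⊤ : ℕ∞) (fun p : ℝ × (Fin n → ℝ) => c p.1 p.2)) (t : ℝ) (q : Fin n → ℝ) :
    HasDerivAt (fun s => c s q) (dT c t q) t := by
  have h1 : Differentiable ℝ (fun p : ℝ × (Fin n → ℝ) => c p.1 p.2) := hc.differentiable (by simp)
  have h2 : Differentiable ℝ (fun s : ℝ => ((s, q) : ℝ × (Fin n → ℝ))) :=
    differentiable_id.prodMk (differentiable_const q)
  exact ((h1.comp h2).differentiableAt).hasDerivAt

lemma hasDerivAt_dQ' {n : ℕ} {c : ℝ → (Fin n → ℝ) → ℝ}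
    (hc : ContDiff ℝ (⊤ : ℕ∞) (fun p : ℝ × (Fin n → ℝ) => c p.1 p.2)) (a : Fin n) (t : ℝ) (q : Fin n → ℝ) :
    HasDerivAt (fun s => c t (Function.update q a s)) (dQ' c a t q) (q a) := by
  have h1 : Differentiable ℝ (fun p : ℝ × (Fin n → ℝ) => c p.1 p.2) := hc.differentiable (by simp)
  have h2 : Differentiable ℝ (fun s : ℝ => ((t, Function.update q a s) : ℝ × (Fin n → ℝ))) :=
    (differentiable_const t).prodMk (diff_update q a)
  exact ((h1.comp h2).differentiableAt).hasDerivAt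

lemma hasDerivAt_comp_update {n : ℕ} (v : Fin n → ℝ) (c a : Fin n) :
    HasDerivAt (fun s => Function.update v c s a) (if a = c then (1:ℝ) else 0) (v c) := by
  simp only [Function.update_apply]
  by_cases h : a = c
  · simpa [h] using (hasDerivAt_id' (x := v c))
  · simpa [h] using (hasDerivAt_const (v c) (v a))

section Shapes
variable {n : ℕ} (t : ℝ) (q v : Fin n → ℝ)

lemma hdT_quad (K2 : Fin n → Fin n → ℝ → (Fin n → ℝ) → ℝ)
    (hK2 : ∀ a b, ContDiff ℝ (⊤ : ℕ∞) (fun p : ℝ × (Fin n → ℝ) => K2 a b p.1 p.2)) :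
    HasDerivAt (fun s => ∑ a, ∑ b, K2 a b s q * v a * v b)
      (∑ a, v a * ∑ b, dT (K2 a b) t q * v b) t := by
  have e : (∑ a, v a * ∑ b, dT (K2 a b) t q * v b)
      = ∑ a, ∑ b, dT (K2 a b) t q * v a * v b := by
    refine sum_eq fun a => ?_
    rw [Finset.mul_sum]; exact sum_eq fun b => by ring
  rw [e]
  exact HasDerivAt.fun_sum fun a _ => HasDerivAt.fun_sum fun b _ =>
    ((hasDerivAt_dT (hK2 a b) t q).mul_const (v a)).mul_const (v b)

lemma hdQ_quad (K2 : Fin n → Fin n → ℝ → (Fin n → ℝ) → ℝ)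
    (hK2 : ∀ a b, ContDiff ℝ (⊤ : ℕ∞) (fun p : ℝ × (Fin n → ℝ) => K2 a b p.1 p.2)) (c : Fin n) :
    HasDerivAt (fun s => ∑ a, ∑ b, K2 a b t (Function.update q c s) * v a * v b)
      (∑ a, v a * ∑ b, dQ' (K2 a b) c t q * v b) (q c) := by
  have e : (∑ a, v a * ∑ b, dQ' (K2 a b) c t q * v b)
      = ∑ a, ∑ b, dQ' (K2 a b) c t q * v a * v b := by
    refine sum_eq fun a => ?_
    rw [Finset.mul_sum]; exact sum_eq fun b => by ring
  rw [e]
  exact HasDerivAt.fun_sum fun a _ => HasDerivAt.fun_sum fun b _ =>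
    ((hasDerivAt_dQ' (hK2 a b) c t q).mul_const (v a)).mul_const (v b)

lemma hdV_quad (K2 : Fin n → Fin n → ℝ → (Fin n → ℝ) → ℝ)
    (hsym : ∀ a b, K2 a b t q = K2 b a t q) (c : Fin n) :
    HasDerivAt (fun s => ∑ a, ∑ b, K2 a b t q * Function.update v c s a * Function.update v c s b)
      (2 * ∑ b, K2 c b t q * v b) (v c) := by
  have H : ∀ a b : Fin n,
      HasDerivAt (fun s => K2 a b t q * Function.update v c s a * Function.update v c s b)
        ((if a = c then (1:ℝ) else 0) * K2 a b t q * v b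
          + (if b = c then (1:ℝ) else 0) * K2 a b t q * v a) (v c) := by
    intro a b
    have ha := hasDerivAt_comp_update v c a
    have hb := hasDerivAt_comp_update v c b
    have h := (ha.fun_mul hb).const_mul (K2 a b t q)
    have hfun : (fun y => K2 a b t q * (Function.update v c y a * Function.update v c y b))
        = fun y => K2 a b t q * Function.update v c y a * Function.update v c y b :=
      funext fun y => (mul_assoc _ _ _).symm
    rw [hfun] at h
    have hval : K2 a b t q * ((if a = c then (1:ℝ) else 0) * Function.update v c (v c) b
          + Function.update v c (v c) a * (if b = c then (1:ℝ) else 0))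
        = (if a = c then (1:ℝ) else 0) * K2 a b t q * v b
          + (if b = c then (1:ℝ) else 0) * K2 a b t q * v a := by
      simp only [Function.update_eq_self]
      ring
    rw [hval] at h
    exact h
  have h := HasDerivAt.fun_sum (u := Finset.univ) fun a _ =>
    HasDerivAt.fun_sum (u := Finset.univ) (A' := fun b =>
      (if a = c then (1:ℝ) else 0) * K2 a b t q * v b
        + (if b = c then (1:ℝ) else 0) * K2 a b t q * v a) fun b _ => H a b
  have e : (∑ a, ∑ b, ((if a = c then (1:ℝ) else 0) * K2 a b t q * v b
      + (if b = c then (1:ℝ) else 0) * K2 a b t q * v a)) = 2 * ∑ b, K2 c b t q * v b := by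
    rw [show (∑ a, ∑ b, ((if a = c then (1:ℝ) else 0) * K2 a b t q * v b
        + (if b = c then (1:ℝ) else 0) * K2 a b t q * v a))
      = (∑ a, ∑ b, (if a = c then (1:ℝ) else 0) * K2 a b t q * v b)
        + ∑ a, ∑ b, (if b = c then (1:ℝ) else 0) * K2 a b t q * v a from by
        simp [Finset.sum_add_distrib]]
    have e1 : (∑ a, ∑ b, (if a = c then (1:ℝ) else 0) * K2 a b t q * v b)
        = ∑ b, K2 c b t q * v b := by
      rw [show (∑ a, ∑ b, (if a = c then (1:ℝ) else 0) * K2 a b t q * v b)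
        = ∑ a, if a = c then (∑ b, K2 a b t q * v b) else 0 from
        sum_eq fun a => by by_cases h : a = c <;> simp [h]]
      simp [Finset.sum_ite_eq']
    have e2 : (∑ a, ∑ b, (if b = c then (1:ℝ) else 0) * K2 a b t q * v a)
        = ∑ b, K2 c b t q * v b := by
      rw [show (∑ a, ∑ b, (if b = c then (1:ℝ) else 0) * K2 a b t q * v a)
        = ∑ a, K2 a c t q * v a from
        sum_eq fun a => by
          rw [show (∑ b, (if b = c then (1:ℝ) else 0) * K2 a b t q * v a)
            = ∑ b, if b = c then K2 a b t q * v a else 0 from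
            sum_eq fun b => by by_cases h : b = c <;> simp [h]]
          simp [Finset.sum_ite_eq']]
      exact sum_eq fun a => by rw [hsym a c]
    rw [e1, e2]; ring
  rw [← e]
  exact h

lemma hdT_lin (K1 : Fin n → ℝ → (Fin n → ℝ) → ℝ)
    (hK1 : ∀ a, ContDiff ℝ (⊤ : ℕ∞) (fun p : ℝ × (Fin n → ℝ) => K1 a p.1 p.2)) :
    HasDerivAt (fun s => ∑ a, K1 a s q * v a) (∑ a, dT (K1 a) t q * v a) t :=
  HasDerivAt.fun_sum fun a _ => (hasDerivAt_dT (hK1 a) t q).mul_const (v a)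

lemma hdQ_lin (K1 : Fin n → ℝ → (Fin n → ℝ) → ℝ)
    (hK1 : ∀ a, ContDiff ℝ (⊤ : ℕ∞) (fun p : ℝ × (Fin n → ℝ) => K1 a p.1 p.2)) (c : Fin n) :
    HasDerivAt (fun s => ∑ a, K1 a t (Function.update q c s) * v a)
      (∑ a, dQ' (K1 a) c t q * v a) (q c) :=
  HasDerivAt.fun_sum fun a _ => (hasDerivAt_dQ' (hK1 a) c t q).mul_const (v a)

lemma hdV_lin (K1 : Fin n → ℝ → (Fin n → ℝ) → ℝ) (c : Fin n) :
    HasDerivAt (fun s => ∑ a, K1 a t q * Function.update v c s a) (K1 c t q) (v c) := by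
  have h := HasDerivAt.fun_sum (u := Finset.univ)
    (A' := fun a => K1 a t q * (if a = c then (1:ℝ) else 0))
    fun a _ => (hasDerivAt_comp_update v c a).const_mul (K1 a t q)
  have e : (∑ a, K1 a t q * (if a = c then (1:ℝ) else 0)) = K1 c t q := by
    simp [mul_ite, Finset.sum_ite_eq']
  rw [← e]; exact h

lemma hdV_kin (c : Fin n) :
    HasDerivAt (fun s => (1/2 : ℝ) * ∑ a, Function.update v c s a * Function.update v c s a)
      (v c) (v c) := by
  have h := (HasDerivAt.fun_sum (u := Finset.univ)
    (A' := fun a => (if a = c then (1:ℝ) else 0) * v a + v a * (if a = c then (1:ℝ) else 0))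
    fun a _ => by
      have ha := hasDerivAt_comp_update v c a
      have h := ha.fun_mul ha
      simpa [Function.update_eq_self] using h).const_mul (1/2 : ℝ)
  have e : (1/2 : ℝ) * (∑ a, ((if a = c then (1:ℝ) else 0) * v a + v a * (if a = c then (1:ℝ) else 0))) = v c := by
    simp [Finset.sum_add_distrib, ite_mul, mul_ite, Finset.sum_ite_eq']
    ring
  rw [e] at h; exact h

lemma hdQ_V {V : (Fin n → ℝ) → ℝ} (hV : ContDiff ℝ (⊤ : ℕ∞) V) (c : Fin n) :
    HasDerivAt (fun s => V (Function.update q c s))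
      (deriv (fun s => V (Function.update q c s)) (q c)) (q c) := by
  have : DifferentiableAt ℝ (fun s => V (Function.update q c s)) (q c) :=
    ((hV.differentiable (by simp)).comp (diff_update q c)).differentiableAt
  exact this.hasDerivAt


lemma hdS {n : ℕ} {V : (Fin n → ℝ) → ℝ} (hV : ContDiff ℝ (⊤ : ℕ∞) V) (q : Fin n → ℝ) (c : Fin n) :
    HasDerivAt (fun s => V (Function.update q c s)) (dS V c q) (q c) :=
  (((hV.differentiable (by simp)).comp (diff_update q c)).differentiableAt).hasDerivAt

end Shapes

/-- Application of the inverse Noether theorem (gauge `ξ = 0`) to a quadratic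
first integral `Λ = K_{ab} v^a v^b + K_a v^a + K` of the Euclidean Lagrangian
`L = ½ δ_{ab} v^a v^b − V(q)` with generalized forces `F^a`. -/
theorem inverse_noether_quadratic_euclidean
    (n : ℕ) (hn : 1 ≤ n)
    (V : (Fin n → ℝ) → ℝ) (hV : ContDiff ℝ (⊤ : ℕ∞) V)
    (F φ : Fin n → ℝ → (Fin n → ℝ) → (Fin n → ℝ) → ℝ)
    (hF : ∀ a, ContDiff ℝ (⊤ : ℕ∞) (fun p : ℝ × (Fin n → ℝ) × (Fin n → ℝ) => F a p.1 p.2.1 p.2.2))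
    (hφ : ∀ a, ContDiff ℝ (⊤ : ℕ∞) (fun p : ℝ × (Fin n → ℝ) × (Fin n → ℝ) => φ a p.1 p.2.1 p.2.2))
    (K2 : Fin n → Fin n → ℝ → (Fin n → ℝ) → ℝ)
    (K1 : Fin n → ℝ → (Fin n → ℝ) → ℝ)
    (K0 : ℝ → (Fin n → ℝ) → ℝ)
    (hK2 : ∀ a b, ContDiff ℝ (⊤ : ℕ∞) (fun p : ℝ × (Fin n → ℝ) => K2 a b p.1 p.2))
    (hK2sym : ∀ a b t q, K2 a b t q = K2 b a t q)
    (hK1 : ∀ a, ContDiff ℝ (⊤ : ℕ∞) (fun p : ℝ × (Fin n → ℝ) => K1 a p.1 p.2))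
    (hK0 : ContDiff ℝ (⊤ : ℕ∞) (fun p : ℝ × (Fin n → ℝ) => K0 p.1 p.2))
    (ω : Fin n → ℝ → (Fin n → ℝ) → (Fin n → ℝ) → ℝ)
    -- the dynamics: `ω^a = −∂V/∂q^a + F^a`
    (hω : ∀ a t q v, ω a t q v = -(dS V a q) + F a t q v)
    (Λ : ℝ → (Fin n → ℝ) → (Fin n → ℝ) → ℝ)
    -- `Λ = K_{ab} v^a v^b + K_a v^a + K`
    (hΛdef : ∀ t q v, Λ t q v =
      (∑ a, ∑ b, K2 a b t q * v a * v b) + (∑ a, K1 a t q * v a) + K0 t q)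
    -- `Λ` is a first integral: `ΓΛ = 0` identically
    (hint : ∀ t q v, Gam ω Λ t q v = 0)
    -- `(φ_a + 2K_{ab}F^b) v^a + K_a F^a = 0`
    (hφc : ∀ t q v,
      (∑ a, (φ a t q v + 2 * ∑ b, K2 a b t q * F b t q v) * v a)
        + (∑ a, K1 a t q * F a t q v) = 0)
    (η : Fin n → ℝ → (Fin n → ℝ) → (Fin n → ℝ) → ℝ)
    -- `η_a = −(2K_{ab} v^b + K_a)`
    (hη : ∀ a t q v, η a t q v = -((2 * ∑ b, K2 a b t q * v b) + K1 a t q))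
    (f : ℝ → (Fin n → ℝ) → (Fin n → ℝ) → ℝ)
    -- gauge function `f = −K_{ab} v^a v^b + K`
    (hfdef : ∀ t q v, f t q v = -(∑ a, ∑ b, K2 a b t q * v a * v b) + K0 t q) :
    -- the gauged weak Noether condition holds identically, and the associated
    -- Noether integral `f − η^a ∂L/∂v^a` equals `Λ`
    (∀ t q v,
      (∑ a, η a t q v * pQ (Leuc V) a t q v)
        + (∑ a, (Gam ω (η a) t q v + φ a t q v) * pV (Leuc V) a t q v)
      = Gam ω f t q v) ∧
    (∀ t q v, f t q v - ∑ a, η a t q v * pV (Leuc V) a t q v = Λ t q v) := by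

  have key : ∀ t q v,
      ((∑ a, η a t q v * pQ (Leuc V) a t q v)
        + (∑ a, (Gam ω (η a) t q v + φ a t q v) * pV (Leuc V) a t q v)
      = Gam ω f t q v)
      ∧ (f t q v - ∑ a, η a t q v * pV (Leuc V) a t q v = Λ t q v) := by
    intro t q v
    -- Lagrangian partials
    have hpVL : ∀ a, pV (Leuc V) a t q v = v a := fun a =>
      ((hdV_kin v a).sub_const (V q)).deriv
    have hpQL : ∀ a, pQ (Leuc V) a t q v = -(dS V a q) := fun a =>
      (HasDerivAt.const_sub ((1/2 : ℝ) * ∑ b, v b * v b) (hdS hV q a)).deriv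
    -- partials of Λ
    have eΛT : (fun s => Λ s q v) = fun s =>
        (∑ a, ∑ b, K2 a b s q * v a * v b) + (∑ a, K1 a s q * v a) + K0 s q :=
      funext fun s => hΛdef s q v
    have hpTΛ : pT Λ t q v
        = ((∑ a, v a * ∑ b, dT (K2 a b) t q * v b) + (∑ a, dT (K1 a) t q * v a)) + dT K0 t q := by
      unfold pT; rw [eΛT]
      exact (((hdT_quad t q v K2 hK2).add (hdT_lin t q v K1 hK1)).add
        (hasDerivAt_dT hK0 t q)).deriv
    have hpQΛ : ∀ c, pQ Λ c t q v
        = ((∑ a, v a * ∑ b, dQ' (K2 a b) c t q * v b) + (∑ a, dQ' (K1 a) c t q * v a))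
          + dQ' K0 c t q := by
      intro c
      have e : (fun s => Λ t (Function.update q c s) v) = fun s =>
          (∑ a, ∑ b, K2 a b t (Function.update q c s) * v a * v b)
            + (∑ a, K1 a t (Function.update q c s) * v a) + K0 t (Function.update q c s) :=
        funext fun s => hΛdef t _ v
      unfold pQ; rw [e]
      exact (((hdQ_quad t q v K2 hK2 c).add (hdQ_lin t q v K1 hK1 c)).add
        (hasDerivAt_dQ' hK0 c t q)).deriv
    have hpVΛ : ∀ c, pV Λ c t q v = (2 * ∑ b, K2 c b t q * v b) + K1 c t q := by
      intro c
      have e : (fun s => Λ t q (Function.update v c s)) = fun s =>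
          (∑ a, ∑ b, K2 a b t q * Function.update v c s a * Function.update v c s b)
            + (∑ a, K1 a t q * Function.update v c s a) + K0 t q :=
        funext fun s => hΛdef t q _
      unfold pV; rw [e]
      exact (((hdV_quad t q v K2 (fun a b => hK2sym a b t q) c).add
        (hdV_lin t q v K1 c)).add_const (K0 t q)).deriv
    -- partials of f
    have efT : (fun s => f s q v) = fun s =>
        -(∑ a, ∑ b, K2 a b s q * v a * v b) + K0 s q := funext fun s => hfdef s q v
    have hpTf : pT f t q v
        = -(∑ a, v a * ∑ b, dT (K2 a b) t q * v b) + dT K0 t q := by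
      unfold pT; rw [efT]
      exact ((hdT_quad t q v K2 hK2).neg.add (hasDerivAt_dT hK0 t q)).deriv
    have hpQf : ∀ c, pQ f c t q v
        = -(∑ a, v a * ∑ b, dQ' (K2 a b) c t q * v b) + dQ' K0 c t q := by
      intro c
      have e : (fun s => f t (Function.update q c s) v) = fun s =>
          -(∑ a, ∑ b, K2 a b t (Function.update q c s) * v a * v b)
            + K0 t (Function.update q c s) := funext fun s => hfdef t _ v
      unfold pQ; rw [e]
      exact ((hdQ_quad t q v K2 hK2 c).neg.add (hasDerivAt_dQ' hK0 c t q)).deriv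
    have hpVf : ∀ c, pV f c t q v = -(2 * ∑ b, K2 c b t q * v b) := by
      intro c
      have e : (fun s => f t q (Function.update v c s)) = fun s =>
          -(∑ a, ∑ b, K2 a b t q * Function.update v c s a * Function.update v c s b)
            + K0 t q := funext fun s => hfdef t q _
      unfold pV; rw [e]
      exact ((hdV_quad t q v K2 (fun a b => hK2sym a b t q) c).neg.add_const (K0 t q)).deriv
    -- partials of η
    have hpTη : ∀ a, pT (η a) t q v
        = -(2 * (∑ b, dT (K2 a b) t q * v b) + dT (K1 a) t q) := by
      intro a
      have e : (fun s => η a s q v) = fun s =>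
          -((2 * ∑ b, K2 a b s q * v b) + K1 a s q) := funext fun s => hη a s q v
      unfold pT; rw [e]
      exact (((hdT_lin t q v (K2 a) (hK2 a)).const_mul 2).add
        (hasDerivAt_dT (hK1 a) t q)).neg.deriv
    have hpQη : ∀ a c, pQ (η a) c t q v
        = -(2 * (∑ b, dQ' (K2 a b) c t q * v b) + dQ' (K1 a) c t q) := by
      intro a c
      have e : (fun s => η a t (Function.update q c s) v) = fun s =>
          -((2 * ∑ b, K2 a b t (Function.update q c s) * v b)
            + K1 a t (Function.update q c s)) := funext fun s => hη a t _ v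
      unfold pQ; rw [e]
      exact (((hdQ_lin t q v (K2 a) (hK2 a) c).const_mul 2).add
        (hasDerivAt_dQ' (hK1 a) c t q)).neg.deriv
    have hpVη : ∀ a c, pV (η a) c t q v = -(2 * K2 a c t q) := by
      intro a c
      have e : (fun s => η a t q (Function.update v c s)) = fun s =>
          -((2 * ∑ b, K2 a b t q * Function.update v c s b) + K1 a t q) :=
        funext fun s => hη a t q _
      unfold pV; rw [e]
      exact (((hdV_lin t q v (K2 a) c).const_mul 2).add_const (K1 a t q)).neg.deriv
    -- Gamma values
    have hGη : ∀ a, Gam ω (η a) t q v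
        = -(2 * (∑ b, dT (K2 a b) t q * v b) + dT (K1 a) t q)
          + (∑ c, v c * -(2 * (∑ b, dQ' (K2 a b) c t q * v b) + dQ' (K1 a) c t q))
          + (∑ c, ω c t q v * -(2 * K2 a c t q)) := by
      intro a
      unfold Gam
      rw [hpTη a]
      congr 1
      · congr 1
        exact sum_eq fun c => by rw [hpQη a c]
      · exact sum_eq fun c => by rw [hpVη a c]
    have hGf : Gam ω f t q v
        = (-(∑ a, v a * ∑ b, dT (K2 a b) t q * v b) + dT K0 t q)
          + (∑ c, v c * (-(∑ a, v a * ∑ b, dQ' (K2 a b) c t q * v b) + dQ' K0 c t q))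
          + (∑ c, ω c t q v * -(2 * ∑ b, K2 c b t q * v b)) := by
      unfold Gam
      rw [hpTf]
      congr 1
      · congr 1
        exact sum_eq fun c => by rw [hpQf c]
      · exact sum_eq fun c => by rw [hpVf c]
    have hGΛ : ((∑ a, v a * ∑ b, dT (K2 a b) t q * v b) + (∑ a, dT (K1 a) t q * v a)) + dT K0 t q
          + (∑ c, v c * (((∑ a, v a * ∑ b, dQ' (K2 a b) c t q * v b)
              + (∑ a, dQ' (K1 a) c t q * v a)) + dQ' K0 c t q))
          + (∑ c, ω c t q v * ((2 * ∑ b, K2 c b t q * v b) + K1 c t q)) = 0 := by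
      have h := hint t q v
      unfold Gam at h
      rw [hpTΛ] at h
      rw [show (∑ a, v a * pQ Λ a t q v) = ∑ c, v c * (((∑ a, v a * ∑ b, dQ' (K2 a b) c t q * v b)
              + (∑ a, dQ' (K1 a) c t q * v a)) + dQ' K0 c t q) from
        sum_eq fun c => by rw [hpQΛ c]] at h
      rw [show (∑ a, ω a t q v * pV Λ a t q v)
          = ∑ c, ω c t q v * ((2 * ∑ b, K2 c b t q * v b) + K1 c t q) from
        sum_eq fun c => by rw [hpVΛ c]] at h
      exact h
    constructor
    · -- the weak Noether condition
      have hA : ∑ a, η a t q v * pQ (Leuc V) a t q v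
          = ∑ a, ((2 * ∑ b, K2 a b t q * v b) + K1 a t q) * dS V a q :=
        sum_eq fun a => by rw [hη, hpQL]; ring
      have hB : ∑ a, (Gam ω (η a) t q v + φ a t q v) * pV (Leuc V) a t q v
          = (∑ a, (-(2 * (∑ b, dT (K2 a b) t q * v b) + dT (K1 a) t q) * v a))
            + (∑ a, ((∑ c, v c * -(2 * (∑ b, dQ' (K2 a b) c t q * v b)
                + dQ' (K1 a) c t q)) * v a))
            + (∑ a, ((∑ c, ω c t q v * -(2 * K2 a c t q)) * v a))
            + (∑ a, φ a t q v * v a) := by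
        rw [← Finset.sum_add_distrib, ← Finset.sum_add_distrib, ← Finset.sum_add_distrib]
        exact sum_eq fun a => by rw [hGη a, hpVL a]; ring
      have hB1 : (∑ a, (-(2 * (∑ b, dT (K2 a b) t q * v b) + dT (K1 a) t q) * v a))
          = -(2 * (∑ a, v a * ∑ b, dT (K2 a b) t q * v b) + ∑ a, dT (K1 a) t q * v a) := by
        rw [show (∑ a, (-(2 * (∑ b, dT (K2 a b) t q * v b) + dT (K1 a) t q) * v a))
            = ∑ a, (-(2 * (v a * ∑ b, dT (K2 a b) t q * v b)) + -(dT (K1 a) t q * v a)) from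
          sum_eq fun a => by ring]
        rw [Finset.sum_add_distrib, Finset.sum_neg_distrib, Finset.sum_neg_distrib,
          ← Finset.mul_sum]
        ring
      have hB2 : (∑ a, ((∑ c, v c * -(2 * (∑ b, dQ' (K2 a b) c t q * v b)
              + dQ' (K1 a) c t q)) * v a))
          = ∑ c, v c * -(2 * (∑ a, v a * ∑ b, dQ' (K2 a b) c t q * v b)
              + ∑ a, dQ' (K1 a) c t q * v a) := by
        rw [show (∑ a, ((∑ c, v c * -(2 * (∑ b, dQ' (K2 a b) c t q * v b)
                + dQ' (K1 a) c t q)) * v a))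
            = ∑ a, ∑ c, (v c * -(2 * (∑ b, dQ' (K2 a b) c t q * v b)
                + dQ' (K1 a) c t q)) * v a from
          sum_eq fun a => by rw [Finset.sum_mul]]
        rw [Finset.sum_comm]
        refine sum_eq fun c => ?_
        rw [show (∑ a, (v c * -(2 * (∑ b, dQ' (K2 a b) c t q * v b)
                + dQ' (K1 a) c t q)) * v a)
            = ∑ a, ((-2 * v c) * (v a * ∑ b, dQ' (K2 a b) c t q * v b)
                + (-(v c)) * (dQ' (K1 a) c t q * v a)) from
          sum_eq fun a => by ring]
        rw [Finset.sum_add_distrib, ← Finset.mul_sum, ← Finset.mul_sum]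
        ring
      have hB3 : (∑ a, ((∑ c, ω c t q v * -(2 * K2 a c t q)) * v a))
          = -(2 * ∑ c, ω c t q v * ∑ b, K2 c b t q * v b) := by
        rw [show (∑ a, ((∑ c, ω c t q v * -(2 * K2 a c t q)) * v a))
            = ∑ a, ∑ c, (ω c t q v * -(2 * K2 a c t q)) * v a from
          sum_eq fun a => by rw [Finset.sum_mul]]
        rw [Finset.sum_comm]
        rw [show (∑ c, ∑ a, (ω c t q v * -(2 * K2 a c t q)) * v a)
            = ∑ c, (-2 * ω c t q v) * ∑ a, K2 c a t q * v a from
          sum_eq fun c => by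
            rw [show (∑ a, (ω c t q v * -(2 * K2 a c t q)) * v a)
                = ∑ a, (-2 * ω c t q v) * (K2 c a t q * v a) from
              sum_eq fun a => by rw [hK2sym a c t q]; ring, ← Finset.mul_sum]]
        rw [show (∑ c, -2 * ω c t q v * ∑ a, K2 c a t q * v a)
            = ∑ c, (-2 : ℝ) * (ω c t q v * ∑ a, K2 c a t q * v a) from
          sum_eq fun c => by ring, ← Finset.mul_sum]
        ring
      have hF' : (∑ a, (2 * ∑ b, K2 a b t q * F b t q v) * v a)
          = 2 * ∑ c, F c t q v * ∑ b, K2 c b t q * v b := by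
        rw [show (∑ a, (2 * ∑ b, K2 a b t q * F b t q v) * v a)
            = ∑ a, ∑ b, 2 * (K2 a b t q * F b t q v * v a) from
          sum_eq fun a => by
            rw [Finset.mul_sum, Finset.sum_mul]
            exact sum_eq fun b => by ring]
        rw [Finset.sum_comm]
        rw [show (∑ b, ∑ a, 2 * (K2 a b t q * F b t q v * v a))
            = ∑ b, (2 * F b t q v) * ∑ a, K2 b a t q * v a from
          sum_eq fun b => by
            rw [show (∑ a, 2 * (K2 a b t q * F b t q v * v a))
                = ∑ a, (2 * F b t q v) * (K2 b a t q * v a) from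
              sum_eq fun a => by rw [hK2sym a b t q]; ring, ← Finset.mul_sum]]
        rw [show (∑ b, 2 * F b t q v * ∑ a, K2 b a t q * v a)
            = ∑ b, (2 : ℝ) * (F b t q v * ∑ a, K2 b a t q * v a) from
          sum_eq fun b => by ring, ← Finset.mul_sum]
      have hφ2 : (∑ a, φ a t q v * v a)
          + (2 * ∑ c, F c t q v * ∑ b, K2 c b t q * v b
            + ∑ c, K1 c t q * F c t q v) = 0 := by
        have h := hφc t q v
        rw [show (∑ a, (φ a t q v + 2 * ∑ b, K2 a b t q * F b t q v) * v a)
            = (∑ a, φ a t q v * v a) + ∑ a, (2 * ∑ b, K2 a b t q * F b t q v) * v a from by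
          rw [← Finset.sum_add_distrib]; exact sum_eq fun a => by ring, hF'] at h
        linear_combination h
      have hωexp : (∑ c, ω c t q v * ((2 * ∑ b, K2 c b t q * v b) + K1 c t q))
          = -(∑ c, ((2 * ∑ b, K2 c b t q * v b) + K1 c t q) * dS V c q)
            + ∑ c, F c t q v * ((2 * ∑ b, K2 c b t q * v b) + K1 c t q) := by
        rw [← Finset.sum_neg_distrib, ← Finset.sum_add_distrib]
        exact sum_eq fun c => by rw [hω c t q v]; ring
      have hsplit : (∑ c, F c t q v * ((2 * ∑ b, K2 c b t q * v b) + K1 c t q))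
          = 2 * (∑ c, F c t q v * ∑ b, K2 c b t q * v b)
            + ∑ c, K1 c t q * F c t q v := by
        rw [show (∑ c, F c t q v * ((2 * ∑ b, K2 c b t q * v b) + K1 c t q))
            = ∑ c, (2 * (F c t q v * ∑ b, K2 c b t q * v b) + K1 c t q * F c t q v) from
          sum_eq fun c => by ring]
        rw [Finset.sum_add_distrib, ← Finset.mul_sum]
      have hcomb : (∑ c, v c * -(2 * (∑ a, v a * ∑ b, dQ' (K2 a b) c t q * v b)
              + ∑ a, dQ' (K1 a) c t q * v a))
          + (∑ c, v c * (((∑ a, v a * ∑ b, dQ' (K2 a b) c t q * v b)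
              + (∑ a, dQ' (K1 a) c t q * v a)) + dQ' K0 c t q))
          = ∑ c, v c * (-(∑ a, v a * ∑ b, dQ' (K2 a b) c t q * v b) + dQ' K0 c t q) := by
        rw [← Finset.sum_add_distrib]
        exact sum_eq fun c => by ring
      have hD : (∑ c, ω c t q v * -(2 * ∑ b, K2 c b t q * v b))
          = -(2 * ∑ c, ω c t q v * ∑ b, K2 c b t q * v b) := by
        rw [show (∑ c, ω c t q v * -(2 * ∑ b, K2 c b t q * v b))
            = ∑ c, (-2) * (ω c t q v * ∑ b, K2 c b t q * v b) from
          sum_eq fun c => by ring, ← Finset.mul_sum]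
        ring
      rw [hGf, hA, hB, hB1, hB2, hB3]
      linear_combination (-1 : ℝ) * hGΛ + hωexp + hsplit + hφ2 + hcomb + (-1 : ℝ) * hD
    · -- the Noether integral
      rw [hfdef t q v, hΛdef t q v]
      rw [show (∑ a, η a t q v * pV (Leuc V) a t q v)
          = ∑ a, -((2 * ∑ b, K2 a b t q * v b) + K1 a t q) * v a from
        sum_eq fun a => by rw [hη, hpVL]]
      rw [show (∑ a, -((2 * ∑ b, K2 a b t q * v b) + K1 a t q) * v a)
          = -(2 * (∑ a, ∑ b, K2 a b t q * v a * v b) + ∑ a, K1 a t q * v a) from ?_]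
      · ring
      rw [show (∑ a, -((2 * ∑ b, K2 a b t q * v b) + K1 a t q) * v a)
          = ∑ a, (-(2 * ∑ b, K2 a b t q * v a * v b) + -(K1 a t q * v a)) from
        sum_eq fun a => by
          have h : (∑ b, K2 a b t q * v b) * v a = ∑ b, K2 a b t q * v a * v b := by
            rw [Finset.sum_mul]; exact sum_eq fun b => by ring
          linear_combination (-2 : ℝ) * h]
      rw [Finset.sum_add_distrib, Finset.sum_neg_distrib, Finset.sum_neg_distrib,
        ← Finset.mul_sum]
      ring
  exact ⟨fun t q v => (key t q v).1, fun t q v => (key t q v).2⟩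
end

section
/- Let n ≥ 1 and consider the system on ℝⁿ with ω^a(q,v) = −Q^a(q) + A^a_b(q) v^b, where Q : ℝⁿ → ℝⁿ and A : ℝⁿ → Mat_{n×n}(ℝ) are smooth. Let K_{ab}(t,q) (symmetric in a,b), K_a(t,q) and K(t,q) be smooth and set I(t,q,v) = K_{ab}(t,q) v^a v^b + K_a(t,q) v^a + K(t,q). Then ∂I/∂t + v^a ∂I/∂q^a + ω^a ∂I/∂v^a = 0 for all (t,q,v) ∈ ℝ × ℝⁿ × ℝⁿ if and only if, for all (t,q) and all indices: (i) ∂K_{ab}/∂q^c + ∂K_{bc}/∂q^a + ∂K_{ca}/∂q^b = 0 (K_{ab} is a Killing tensor in q); (ii) ∂K_{ab}/∂t + ½(∂K_a/∂q^b + ∂K_b/∂q^a) + K_{ca} A^c_b + K_{cb} A^c_a = 0; (iii) −2K_{ab} Q^b + ∂K_a/∂t + ∂K/∂q^a + K_b A^b_a = 0; (iv) ∂K/∂t − K_a Q^a = 0. -/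
/-- Partial time derivative `∂f/∂t` of a function `f(t, q)`. -/
noncomputable def dT2 {n : ℕ} (f : ℝ → (Fin n → ℝ) → ℝ) (t : ℝ) (q : Fin n → ℝ) : ℝ :=
  deriv (fun s => f s q) t

/-- Spatial partial derivative `∂f/∂q^a` of a function `f(t, q)`. -/
noncomputable def dQ2 {n : ℕ} (f : ℝ → (Fin n → ℝ) → ℝ) (a : Fin n) (t : ℝ)
    (q : Fin n → ℝ) : ℝ :=
  deriv (fun s => f t (Function.update q a s)) (q a)

section QFICaux
variable {n : ℕ}


/-- collapse: sum against a combination of three "basis" ites -/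
lemma collapse1 (g : Fin n → ℝ) (a b c : Fin n) (x y z : ℝ) :
    (∑ i, g i * (x * (if i = a then (1:ℝ) else 0) + y * (if i = b then (1:ℝ) else 0)
       + z * (if i = c then (1:ℝ) else 0))) = x * g a + y * g b + z * g c := by
  simp [mul_add, Finset.sum_add_distrib, mul_ite, mul_comm]

lemma poly3_zero {c3 c2 c1 c0 : ℝ}
    (h : ∀ s : ℝ, c3 * s^3 + c2 * s^2 + c1 * s + c0 = 0) :
    c3 = 0 ∧ c2 = 0 ∧ c1 = 0 ∧ c0 = 0 := by
  have h0 := h 0; have h1 := h 1; have h2 := h (-1); have h3 := h 2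
  norm_num at h0 h1 h2 h3
  refine ⟨by linarith, by linarith, by linarith, by linarith⟩


lemma quad_extract {M : Fin n → Fin n → ℝ}
    (h : ∀ v : Fin n → ℝ, (∑ a, ∑ b, M a b * v a * v b) = 0) (a b : Fin n) :
    M a b + M b a = 0 := by
  have h1 := h (fun i => (if i = a then (1:ℝ) else 0) + (if i = b then 1 else 0))
  have h2 := h (fun i => (if i = a then (1:ℝ) else 0) - (if i = b then 1 else 0))
  simp [mul_add, add_mul, mul_sub, sub_mul, mul_ite, ite_mul,
    Finset.sum_add_distrib, Finset.sum_sub_distrib] at h1 h2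
  linarith

lemma cubic_extract {T : Fin n → Fin n → Fin n → ℝ}
    (h : ∀ v : Fin n → ℝ, (∑ a, ∑ b, ∑ c, T a b c * v a * v b * v c) = 0)
    (a b c : Fin n) :
    T a b c + T a c b + T b a c + T b c a + T c a b + T c b a = 0 := by
  have h1 := h (fun i => (if i = a then (1:ℝ) else 0) + (if i = b then 1 else 0)
      + (if i = c then 1 else 0))
  have h2 := h (fun i => (if i = a then (1:ℝ) else 0) + (if i = b then 1 else 0)
      - (if i = c then 1 else 0))
  have h3 := h (fun i => (if i = a then (1:ℝ) else 0) - (if i = b then 1 else 0)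
      + (if i = c then 1 else 0))
  have h4 := h (fun i => -(if i = a then (1:ℝ) else 0) + (if i = b then 1 else 0)
      + (if i = c then 1 else 0))
  simp [mul_add, add_mul, mul_sub, sub_mul, neg_mul, mul_neg, mul_ite, ite_mul,
    Finset.sum_add_distrib, Finset.sum_sub_distrib] at h1 h2 h3 h4
  linarith
lemma lin_extract {L : Fin n → ℝ}
    (h : ∀ v : Fin n → ℝ, (∑ a, L a * v a) = 0) (a : Fin n) : L a = 0 := by
  have := h (fun i => if i = a then 1 else 0)
  simpa [mul_ite] using this

lemma diffT {f : ℝ → (Fin n → ℝ) → ℝ}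
    (hf : ContDiff ℝ (⊤ : ℕ∞) (fun p : ℝ × (Fin n → ℝ) => f p.1 p.2)) (t : ℝ) (q : Fin n → ℝ) :
    DifferentiableAt ℝ (fun s => f s q) t := by
  have hd : Differentiable ℝ (fun p : ℝ × (Fin n → ℝ) => f p.1 p.2) :=
    hf.differentiable (by simp)
  exact (hd.comp (Differentiable.prodMk differentiable_id (differentiable_const q))).differentiableAt

lemma diffQ {f : ℝ → (Fin n → ℝ) → ℝ}
    (hf : ContDiff ℝ (⊤ : ℕ∞) (fun p : ℝ × (Fin n → ℝ) => f p.1 p.2))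
    (e : Fin n) (t : ℝ) (q : Fin n → ℝ) (x : ℝ) :
    DifferentiableAt ℝ (fun s => f t (Function.update q e s)) x := by
  have hd : Differentiable ℝ (fun p : ℝ × (Fin n → ℝ) => f p.1 p.2) :=
    hf.differentiable (by simp)
  have hu : Differentiable ℝ (fun s : ℝ => Function.update q e s) :=
    fun y => (hasDerivAt_update q e y).differentiableAt
  exact (hd.comp (Differentiable.prodMk (differentiable_const t) hu)).differentiableAt

variable
    (K2 : Fin n → Fin n → ℝ → (Fin n → ℝ) → ℝ)
    (K1 : Fin n → ℝ → (Fin n → ℝ) → ℝ)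
    (K0 : ℝ → (Fin n → ℝ) → ℝ)
    (I : ℝ → (Fin n → ℝ) → (Fin n → ℝ) → ℝ)

lemma pT_eq
    (hK2 : ∀ a b, ContDiff ℝ (⊤ : ℕ∞) (fun p : ℝ × (Fin n → ℝ) => K2 a b p.1 p.2))
    (hK1 : ∀ a, ContDiff ℝ (⊤ : ℕ∞) (fun p : ℝ × (Fin n → ℝ) => K1 a p.1 p.2))
    (hK0 : ContDiff ℝ (⊤ : ℕ∞) (fun p : ℝ × (Fin n → ℝ) => K0 p.1 p.2))
    (hI : ∀ t q v, I t q v =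
      (∑ a, ∑ b, K2 a b t q * v a * v b) + (∑ a, K1 a t q * v a) + K0 t q)
    (t : ℝ) (q v : Fin n → ℝ) :
    pT I t q v = (∑ a, ∑ b, dT2 (K2 a b) t q * v a * v b)
      + (∑ a, dT2 (K1 a) t q * v a) + dT2 K0 t q := by
  have hfun : (fun s => I s q v) = fun s =>
      (∑ a, ∑ b, K2 a b s q * v a * v b) + (∑ a, K1 a s q * v a) + K0 s q :=
    funext fun s => hI s q v
  have H : HasDerivAt (fun s =>
      (∑ a, ∑ b, K2 a b s q * v a * v b) + (∑ a, K1 a s q * v a) + K0 s q)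
      ((∑ a, ∑ b, dT2 (K2 a b) t q * v a * v b)
        + (∑ a, dT2 (K1 a) t q * v a) + dT2 K0 t q) t := by
    refine HasDerivAt.add (HasDerivAt.add ?_ ?_) ?_
    · exact HasDerivAt.fun_sum fun a _ => HasDerivAt.fun_sum fun b _ =>
        (((diffT (hK2 a b) t q).hasDerivAt.mul_const (v a)).mul_const (v b))
    · exact HasDerivAt.fun_sum fun a _ => (diffT (hK1 a) t q).hasDerivAt.mul_const (v a)
    · exact (diffT hK0 t q).hasDerivAt
  rw [pT, hfun]
  exact H.deriv

lemma pQ_eq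
    (hK2 : ∀ a b, ContDiff ℝ (⊤ : ℕ∞) (fun p : ℝ × (Fin n → ℝ) => K2 a b p.1 p.2))
    (hK1 : ∀ a, ContDiff ℝ (⊤ : ℕ∞) (fun p : ℝ × (Fin n → ℝ) => K1 a p.1 p.2))
    (hK0 : ContDiff ℝ (⊤ : ℕ∞) (fun p : ℝ × (Fin n → ℝ) => K0 p.1 p.2))
    (hI : ∀ t q v, I t q v =
      (∑ a, ∑ b, K2 a b t q * v a * v b) + (∑ a, K1 a t q * v a) + K0 t q)
    (e : Fin n) (t : ℝ) (q v : Fin n → ℝ) :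
    pQ I e t q v = (∑ a, ∑ b, dQ2 (K2 a b) e t q * v a * v b)
      + (∑ a, dQ2 (K1 a) e t q * v a) + dQ2 K0 e t q := by
  have hfun : (fun s => I t (Function.update q e s) v) = fun s =>
      (∑ a, ∑ b, K2 a b t (Function.update q e s) * v a * v b)
        + (∑ a, K1 a t (Function.update q e s) * v a) + K0 t (Function.update q e s) :=
    funext fun s => hI t _ v
  have H : HasDerivAt (fun s =>
      (∑ a, ∑ b, K2 a b t (Function.update q e s) * v a * v b)
        + (∑ a, K1 a t (Function.update q e s) * v a) + K0 t (Function.update q e s))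
      ((∑ a, ∑ b, dQ2 (K2 a b) e t q * v a * v b)
        + (∑ a, dQ2 (K1 a) e t q * v a) + dQ2 K0 e t q) (q e) := by
    refine HasDerivAt.add (HasDerivAt.add ?_ ?_) ?_
    · exact HasDerivAt.fun_sum fun a _ => HasDerivAt.fun_sum fun b _ =>
        (((diffQ (hK2 a b) e t q (q e)).hasDerivAt.mul_const (v a)).mul_const (v b))
    · exact HasDerivAt.fun_sum fun a _ => (diffQ (hK1 a) e t q (q e)).hasDerivAt.mul_const (v a)
    · exact (diffQ hK0 e t q (q e)).hasDerivAt
  rw [pQ, hfun]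
  exact H.deriv

lemma hasDerivAt_update_comp (v : Fin n → ℝ) (e a : Fin n) (s₀ : ℝ) :
    HasDerivAt (fun s => Function.update v e s a) (if a = e then (1:ℝ) else 0) s₀ := by
  rcases eq_or_ne a e with h | h
  · subst h
    simp only [Function.update_self, if_pos rfl]
    exact hasDerivAt_id s₀
  · simp only [Function.update_of_ne h, if_neg h]
    exact hasDerivAt_const s₀ (v a)

lemma pV_eq
    (hI : ∀ t q v, I t q v =
      (∑ a, ∑ b, K2 a b t q * v a * v b) + (∑ a, K1 a t q * v a) + K0 t q)
    (e : Fin n) (t : ℝ) (q v : Fin n → ℝ) :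
    pV I e t q v = (∑ b, K2 e b t q * v b) + (∑ a, K2 a e t q * v a) + K1 e t q := by
  have hfun : (fun s => I t q (Function.update v e s)) = fun s =>
      (∑ a, ∑ b, K2 a b t q * Function.update v e s a * Function.update v e s b)
        + (∑ a, K1 a t q * Function.update v e s a) + K0 t q :=
    funext fun s => hI t q _
  have H : HasDerivAt (fun s =>
      (∑ a, ∑ b, K2 a b t q * Function.update v e s a * Function.update v e s b)
        + (∑ a, K1 a t q * Function.update v e s a) + K0 t q)
      ((∑ a, ∑ b, (K2 a b t q * (if a = e then (1:ℝ) else 0) * Function.update v e (v e) b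
          + K2 a b t q * Function.update v e (v e) a * (if b = e then (1:ℝ) else 0)))
        + (∑ a, K1 a t q * (if a = e then (1:ℝ) else 0)) + 0) (v e) := by
    refine HasDerivAt.add (HasDerivAt.add ?_ ?_) ?_
    · exact HasDerivAt.fun_sum fun a _ => HasDerivAt.fun_sum fun b _ =>
        ((hasDerivAt_update_comp v e a (v e)).const_mul (K2 a b t q)).mul
          (hasDerivAt_update_comp v e b (v e))
    · exact HasDerivAt.fun_sum fun a _ =>
        (hasDerivAt_update_comp v e a (v e)).const_mul (K1 a t q)
    · exact hasDerivAt_const (v e) (K0 t q)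
  rw [pV, hfun]
  rw [H.deriv]
  simp [Function.update_eq_self, mul_ite, ite_mul, Finset.sum_add_distrib]


lemma sum2_swap (f : Fin n → Fin n → ℝ) :
    ∑ a, ∑ b, f a b = ∑ a, ∑ b, f b a := Finset.sum_comm

lemma sum3_swap12 (f : Fin n → Fin n → Fin n → ℝ) :
    ∑ a, ∑ b, ∑ c, f a b c = ∑ a, ∑ b, ∑ c, f b a c := Finset.sum_comm

lemma rot3 (f : Fin n → Fin n → Fin n → ℝ) :
    ∑ a, ∑ b, ∑ c, f a b c = ∑ a, ∑ b, ∑ c, f c a b := by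
  rw [Finset.sum_comm]
  exact Finset.sum_congr rfl fun _ _ => Finset.sum_comm

lemma L_mulsum3 (T : Fin n → Fin n → Fin n → ℝ) (v : Fin n → ℝ) :
    (∑ e, v e * (∑ a, ∑ b, T a b e * v a * v b))
      = ∑ a, ∑ b, ∑ c, T a b c * v a * v b * v c := by
  simp only [Finset.mul_sum]
  rw [rot3 (fun e a b => v e * (T a b e * v a * v b))]
  exact Finset.sum_congr rfl fun a _ => Finset.sum_congr rfl fun b _ =>
    Finset.sum_congr rfl fun c _ => by ring

lemma L_mulsum2 (c : Fin n → Fin n → ℝ) (v : Fin n → ℝ) :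
    (∑ e, v e * (∑ a, c a e * v a)) = ∑ a, ∑ b, c a b * v a * v b := by
  simp only [Finset.mul_sum]
  rw [sum2_swap (fun e a => v e * (c a e * v a))]
  exact Finset.sum_congr rfl fun a _ => Finset.sum_congr rfl fun b _ => by ring

lemma L_QS (M : Fin n → Fin n → ℝ) (f v : Fin n → ℝ) :
    (∑ a, f a * (∑ b, M a b * v b)) = ∑ a, ∑ b, M b a * f b * v a := by
  simp only [Finset.mul_sum]
  rw [sum2_swap (fun a b => f a * (M a b * v b))]
  exact Finset.sum_congr rfl fun a _ => Finset.sum_congr rfl fun b _ => by ring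

lemma L_AS (B M : Fin n → Fin n → ℝ) (v : Fin n → ℝ) :
    (∑ a, (∑ b, B a b * v b) * (∑ c, M a c * v c))
      = ∑ a, ∑ b, ∑ c, M c a * B c b * v a * v b := by
  simp only [Finset.sum_mul_sum]
  rw [rot3 (fun a b c => B a b * v b * (M a c * v c))]
  rw [sum3_swap12 (fun a b c => B c a * v a * (M c b * v b))]
  exact Finset.sum_congr rfl fun a _ => Finset.sum_congr rfl fun b _ =>
    Finset.sum_congr rfl fun c _ => by ring

lemma L_AK1 (B : Fin n → Fin n → ℝ) (k v : Fin n → ℝ) :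
    (∑ a, (∑ b, B a b * v b) * k a) = ∑ a, ∑ b, k b * B b a * v a := by
  simp only [Finset.sum_mul]
  rw [sum2_swap (fun a b => B a b * v b * k a)]
  exact Finset.sum_congr rfl fun a _ => Finset.sum_congr rfl fun b _ => by ring


lemma scale3 (T : Fin n → Fin n → Fin n → ℝ) (s : ℝ) (v : Fin n → ℝ) :
    (∑ a, ∑ b, ∑ c, T a b c * (s * v a) * (s * v b) * (s * v c))
      = s ^ 3 * ∑ a, ∑ b, ∑ c, T a b c * v a * v b * v c := by
  simp only [Finset.mul_sum]
  exact Finset.sum_congr rfl fun a _ => Finset.sum_congr rfl fun b _ =>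
    Finset.sum_congr rfl fun c _ => by ring

lemma scale2 (M : Fin n → Fin n → ℝ) (s : ℝ) (v : Fin n → ℝ) :
    (∑ a, ∑ b, M a b * (s * v a) * (s * v b))
      = s ^ 2 * ∑ a, ∑ b, M a b * v a * v b := by
  simp only [Finset.mul_sum]
  exact Finset.sum_congr rfl fun a _ => Finset.sum_congr rfl fun b _ => by ring

lemma scale1 (L : Fin n → ℝ) (s : ℝ) (v : Fin n → ℝ) :
    (∑ a, L a * (s * v a)) = s * ∑ a, L a * v a := by
  simp only [Finset.mul_sum]
  exact Finset.sum_congr rfl fun a _ => by ring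
lemma key_calc
    (Q : (Fin n → ℝ) → Fin n → ℝ) (A : (Fin n → ℝ) → Fin n → Fin n → ℝ)
    (hK2 : ∀ a b, ContDiff ℝ (⊤ : ℕ∞) (fun p : ℝ × (Fin n → ℝ) => K2 a b p.1 p.2))
    (hK2sym : ∀ a b t q, K2 a b t q = K2 b a t q)
    (hK1 : ∀ a, ContDiff ℝ (⊤ : ℕ∞) (fun p : ℝ × (Fin n → ℝ) => K1 a p.1 p.2))
    (hK0 : ContDiff ℝ (⊤ : ℕ∞) (fun p : ℝ × (Fin n → ℝ) => K0 p.1 p.2))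
    (hI : ∀ t q v, I t q v =
      (∑ a, ∑ b, K2 a b t q * v a * v b) + (∑ a, K1 a t q * v a) + K0 t q)
    (t : ℝ) (q v : Fin n → ℝ) :
    pT I t q v + (∑ a, v a * pQ I a t q v)
      + (∑ a, (-(Q q a) + ∑ b, A q a b * v b) * pV I a t q v)
    = (∑ a, ∑ b, ∑ c, dQ2 (K2 a b) c t q * v a * v b * v c)
      + (∑ a, ∑ b, (dT2 (K2 a b) t q + dQ2 (K1 a) b t q
          + 2 * ∑ c, K2 c a t q * A q c b) * v a * v b)
      + (∑ a, (dT2 (K1 a) t q + dQ2 K0 a t q - 2 * (∑ b, K2 a b t q * Q q b)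
          + ∑ b, K1 b t q * A q b a) * v a)
      + (dT2 K0 t q - ∑ a, K1 a t q * Q q a) := by
  rw [pT_eq K2 K1 K0 I hK2 hK1 hK0 hI t q v]
  simp only [pQ_eq K2 K1 K0 I hK2 hK1 hK0 hI, pV_eq K2 K1 K0 I hI]
  have hsymsum : ∀ a : Fin n, (∑ b, K2 b a t q * v b) = ∑ b, K2 a b t q * v b :=
    fun a => Finset.sum_congr rfl fun b _ => by rw [hK2sym]
  simp only [hsymsum]
  -- distribute the two big sums
  have e1 : (∑ e, v e * ((∑ a, ∑ b, dQ2 (K2 a b) e t q * v a * v b)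
        + (∑ a, dQ2 (K1 a) e t q * v a) + dQ2 K0 e t q))
      = (∑ e, v e * (∑ a, ∑ b, dQ2 (K2 a b) e t q * v a * v b))
        + (∑ e, v e * (∑ a, dQ2 (K1 a) e t q * v a))
        + (∑ e, v e * dQ2 K0 e t q) := by
    rw [← Finset.sum_add_distrib, ← Finset.sum_add_distrib]
    exact Finset.sum_congr rfl fun e _ => by ring
  have e2 : (∑ a, (-(Q q a) + ∑ b, A q a b * v b)
        * ((∑ b, K2 a b t q * v b) + (∑ b, K2 a b t q * v b) + K1 a t q))
      = (∑ a, (∑ b, A q a b * v b) * (∑ b, K2 a b t q * v b))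
        + (∑ a, (∑ b, A q a b * v b) * (∑ b, K2 a b t q * v b))
        + (∑ a, (∑ b, A q a b * v b) * K1 a t q)
        - (∑ a, Q q a * (∑ b, K2 a b t q * v b))
        - (∑ a, Q q a * (∑ b, K2 a b t q * v b))
        - (∑ a, Q q a * K1 a t q) := by
    rw [← Finset.sum_add_distrib, ← Finset.sum_add_distrib,
      ← Finset.sum_sub_distrib, ← Finset.sum_sub_distrib, ← Finset.sum_sub_distrib]
    exact Finset.sum_congr rfl fun a _ => by ring
  rw [e1, e2]
  -- canonicalize LHS components
  have hA : (∑ e, v e * (∑ a, ∑ b, dQ2 (K2 a b) e t q * v a * v b))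
      = ∑ a, ∑ b, ∑ c, dQ2 (K2 a b) c t q * v a * v b * v c :=
    L_mulsum3 (fun a b e => dQ2 (K2 a b) e t q) v
  have hB : (∑ e, v e * (∑ a, dQ2 (K1 a) e t q * v a))
      = ∑ a, ∑ b, dQ2 (K1 a) b t q * v a * v b :=
    L_mulsum2 (fun a e => dQ2 (K1 a) e t q) v
  have hC : (∑ e, v e * dQ2 K0 e t q) = ∑ a, dQ2 K0 a t q * v a :=
    Finset.sum_congr rfl fun a _ => by ring
  have hF : (∑ a, (∑ b, A q a b * v b) * (∑ b, K2 a b t q * v b))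
      = ∑ a, ∑ b, ∑ c, K2 c a t q * A q c b * v a * v b :=
    L_AS (fun a b => A q a b) (fun a c => K2 a c t q) v
  have hH : (∑ a, (∑ b, A q a b * v b) * K1 a t q)
      = ∑ a, ∑ b, K1 b t q * A q b a * v a :=
    L_AK1 (fun a b => A q a b) (fun a => K1 a t q) v
  have hD : (∑ a, Q q a * (∑ b, K2 a b t q * v b))
      = ∑ a, ∑ b, K2 b a t q * Q q b * v a :=
    L_QS (fun a b => K2 a b t q) (Q q) v
  have hDsym : (∑ a, ∑ b, K2 b a t q * Q q b * v a)
      = ∑ a, ∑ b, K2 a b t q * Q q b * v a :=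
    Finset.sum_congr rfl fun a _ => Finset.sum_congr rfl fun b _ => by rw [hK2sym]
  have hQK : (∑ a, Q q a * K1 a t q) = ∑ a, K1 a t q * Q q a :=
    Finset.sum_congr rfl fun a _ => by ring
  -- expand RHS quadratic block
  have hinner : ∀ a b : Fin n,
      (dT2 (K2 a b) t q + dQ2 (K1 a) b t q + 2 * ∑ c, K2 c a t q * A q c b) * v a * v b
      = dT2 (K2 a b) t q * v a * v b + dQ2 (K1 a) b t q * v a * v b
        + ∑ c, 2 * (K2 c a t q * A q c b * v a * v b) := by
    intro a b
    have h2s : (2 * ∑ c, K2 c a t q * A q c b) * v a * v b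
        = ∑ c, 2 * (K2 c a t q * A q c b * v a * v b) := by
      rw [Finset.mul_sum, Finset.sum_mul, Finset.sum_mul]
      exact Finset.sum_congr rfl fun c _ => by ring
    rw [add_mul, add_mul, add_mul, add_mul, h2s]
  have r2 : (∑ a, ∑ b, (dT2 (K2 a b) t q + dQ2 (K1 a) b t q
        + 2 * ∑ c, K2 c a t q * A q c b) * v a * v b)
      = (∑ a, ∑ b, dT2 (K2 a b) t q * v a * v b)
        + (∑ a, ∑ b, dQ2 (K1 a) b t q * v a * v b)
        + (∑ a, ∑ b, ∑ c, 2 * (K2 c a t q * A q c b * v a * v b)) := by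
    calc (∑ a, ∑ b, (dT2 (K2 a b) t q + dQ2 (K1 a) b t q
          + 2 * ∑ c, K2 c a t q * A q c b) * v a * v b)
        = ∑ a, ∑ b, (dT2 (K2 a b) t q * v a * v b + dQ2 (K1 a) b t q * v a * v b
            + ∑ c, 2 * (K2 c a t q * A q c b * v a * v b)) :=
          Finset.sum_congr rfl fun a _ => Finset.sum_congr rfl fun b _ => hinner a b
      _ = _ := by simp only [Finset.sum_add_distrib]
  have hKA : (∑ a, ∑ b, ∑ c, 2 * (K2 c a t q * A q c b * v a * v b))
      = 2 * ∑ a, ∑ b, ∑ c, K2 c a t q * A q c b * v a * v b := by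
    simp only [Finset.mul_sum]
  -- expand RHS linear block
  have hinner1 : ∀ a : Fin n,
      (dT2 (K1 a) t q + dQ2 K0 a t q - 2 * (∑ b, K2 a b t q * Q q b)
        + ∑ b, K1 b t q * A q b a) * v a
      = dT2 (K1 a) t q * v a + dQ2 K0 a t q * v a
        - (∑ b, 2 * (K2 a b t q * Q q b * v a)) + ∑ b, K1 b t q * A q b a * v a := by
    intro a
    have t1 : (2 * ∑ b, K2 a b t q * Q q b) * v a
        = ∑ b, 2 * (K2 a b t q * Q q b * v a) := by
      rw [Finset.mul_sum, Finset.sum_mul]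
      exact Finset.sum_congr rfl fun b _ => by ring
    have t2 : (∑ b, K1 b t q * A q b a) * v a = ∑ b, K1 b t q * A q b a * v a :=
      Finset.sum_mul _ _ _
    rw [add_mul, sub_mul, add_mul, t1, t2]
  have r1 : (∑ a, (dT2 (K1 a) t q + dQ2 K0 a t q - 2 * (∑ b, K2 a b t q * Q q b)
        + ∑ b, K1 b t q * A q b a) * v a)
      = (∑ a, dT2 (K1 a) t q * v a) + (∑ a, dQ2 K0 a t q * v a)
        - (∑ a, ∑ b, 2 * (K2 a b t q * Q q b * v a))
        + (∑ a, ∑ b, K1 b t q * A q b a * v a) := by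
    calc (∑ a, (dT2 (K1 a) t q + dQ2 K0 a t q - 2 * (∑ b, K2 a b t q * Q q b)
          + ∑ b, K1 b t q * A q b a) * v a)
        = ∑ a, (dT2 (K1 a) t q * v a + dQ2 K0 a t q * v a
            - (∑ b, 2 * (K2 a b t q * Q q b * v a)) + ∑ b, K1 b t q * A q b a * v a) :=
          Finset.sum_congr rfl fun a _ => hinner1 a
      _ = _ := by simp only [Finset.sum_add_distrib, Finset.sum_sub_distrib]
  have hKQ : (∑ a, ∑ b, 2 * (K2 a b t q * Q q b * v a))
      = 2 * ∑ a, ∑ b, K2 a b t q * Q q b * v a := by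
    simp only [Finset.mul_sum]
  rw [r2, r1]
  linarith [hA, hB, hC, hF, hH, hD, hDsym, hQK, hKA, hKQ]
end QFICaux

/-- The conditions for `I = K_{ab} v^a v^b + K_a v^a + K` to be a quadratic first
integral of the autonomous holonomic system `q̈^a = −Q^a(q) + A^a_b(q) q̇^b`. -/

theorem quadratic_first_integral_conditions
    (n : ℕ) (hn : 1 ≤ n)
    (Q : (Fin n → ℝ) → Fin n → ℝ) (A : (Fin n → ℝ) → Fin n → Fin n → ℝ)
    (hQ : ContDiff ℝ (⊤ : ℕ∞) Q) (hA : ∀ a b, ContDiff ℝ (⊤ : ℕ∞) (fun q => A q a b))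
    (K2 : Fin n → Fin n → ℝ → (Fin n → ℝ) → ℝ)
    (K1 : Fin n → ℝ → (Fin n → ℝ) → ℝ)
    (K0 : ℝ → (Fin n → ℝ) → ℝ)
    (hK2 : ∀ a b, ContDiff ℝ (⊤ : ℕ∞) (fun p : ℝ × (Fin n → ℝ) => K2 a b p.1 p.2))
    (hK2sym : ∀ a b t q, K2 a b t q = K2 b a t q)
    (hK1 : ∀ a, ContDiff ℝ (⊤ : ℕ∞) (fun p : ℝ × (Fin n → ℝ) => K1 a p.1 p.2))
    (hK0 : ContDiff ℝ (⊤ : ℕ∞) (fun p : ℝ × (Fin n → ℝ) => K0 p.1 p.2))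
    (I : ℝ → (Fin n → ℝ) → (Fin n → ℝ) → ℝ)
    -- `I = K_{ab} v^a v^b + K_a v^a + K`
    (hI : ∀ t q v, I t q v =
      (∑ a, ∑ b, K2 a b t q * v a * v b) + (∑ a, K1 a t q * v a) + K0 t q) :
    -- `ΓI = 0` identically ...
    (∀ t q v, pT I t q v + (∑ a, v a * pQ I a t q v)
        + (∑ a, (-(Q q a) + ∑ b, A q a b * v b) * pV I a t q v) = 0)
    ↔
    -- ... iff the four geometric conditions hold:
    ((∀ t q, ∀ a b c : Fin n,
        dQ2 (K2 a b) c t q + dQ2 (K2 b c) a t q + dQ2 (K2 c a) b t q = 0) ∧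
     (∀ t q, ∀ a b : Fin n,
        dT2 (K2 a b) t q + (1 / 2) * (dQ2 (K1 a) b t q + dQ2 (K1 b) a t q)
          + (∑ c, K2 c a t q * A q c b) + (∑ c, K2 c b t q * A q c a) = 0) ∧
     (∀ t q, ∀ a : Fin n,
        -2 * (∑ b, K2 a b t q * Q q b) + dT2 (K1 a) t q + dQ2 K0 a t q
          + (∑ b, K1 b t q * A q b a) = 0) ∧
     (∀ t q, dT2 K0 t q - (∑ a, K1 a t q * Q q a) = 0)) := by
  have key := key_calc K2 K1 K0 I Q A hK2 hK2sym hK1 hK0 hI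
  have hdT2sym : ∀ (a b : Fin n) t q, dT2 (K2 a b) t q = dT2 (K2 b a) t q := by
    intro a b t q
    have h : K2 a b = K2 b a := funext fun t' => funext fun q' => hK2sym a b t' q'
    rw [h]
  have hdQ2sym : ∀ (a b c : Fin n) t q, dQ2 (K2 a b) c t q = dQ2 (K2 b a) c t q := by
    intro a b c t q
    have h : K2 a b = K2 b a := funext fun t' => funext fun q' => hK2sym a b t' q'
    rw [h]
  constructor
  · -- forward direction
    intro h
    have h' : ∀ (t : ℝ) (q v : Fin n → ℝ),
        (∑ a, ∑ b, ∑ c, dQ2 (K2 a b) c t q * v a * v b * v c)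
          + (∑ a, ∑ b, (dT2 (K2 a b) t q + dQ2 (K1 a) b t q
              + 2 * ∑ c, K2 c a t q * A q c b) * v a * v b)
          + (∑ a, (dT2 (K1 a) t q + dQ2 K0 a t q - 2 * (∑ b, K2 a b t q * Q q b)
              + ∑ b, K1 b t q * A q b a) * v a)
          + (dT2 K0 t q - ∑ a, K1 a t q * Q q a) = 0 :=
      fun t q v => (key t q v).symm.trans (h t q v)
    -- separate by degree
    have hsep : ∀ (t : ℝ) (q : Fin n → ℝ),
        (∀ v : Fin n → ℝ, (∑ a, ∑ b, ∑ c, dQ2 (K2 a b) c t q * v a * v b * v c) = 0) ∧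
        (∀ v : Fin n → ℝ, (∑ a, ∑ b, (dT2 (K2 a b) t q + dQ2 (K1 a) b t q
            + 2 * ∑ c, K2 c a t q * A q c b) * v a * v b) = 0) ∧
        (∀ v : Fin n → ℝ, (∑ a, (dT2 (K1 a) t q + dQ2 K0 a t q
            - 2 * (∑ b, K2 a b t q * Q q b) + ∑ b, K1 b t q * A q b a) * v a) = 0) ∧
        (dT2 K0 t q - (∑ a, K1 a t q * Q q a)) = 0 := by
      intro t q
      have hpoly : ∀ (v : Fin n → ℝ),
          (∑ a, ∑ b, ∑ c, dQ2 (K2 a b) c t q * v a * v b * v c) = 0 ∧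
          (∑ a, ∑ b, (dT2 (K2 a b) t q + dQ2 (K1 a) b t q
              + 2 * ∑ c, K2 c a t q * A q c b) * v a * v b) = 0 ∧
          (∑ a, (dT2 (K1 a) t q + dQ2 K0 a t q - 2 * (∑ b, K2 a b t q * Q q b)
              + ∑ b, K1 b t q * A q b a) * v a) = 0 ∧
          (dT2 K0 t q - (∑ a, K1 a t q * Q q a)) = 0 := by
        intro v
        have hform : ∀ s : ℝ,
            (∑ a, ∑ b, ∑ c, dQ2 (K2 a b) c t q * v a * v b * v c) * s ^ 3
            + (∑ a, ∑ b, (dT2 (K2 a b) t q + dQ2 (K1 a) b t q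
                + 2 * ∑ c, K2 c a t q * A q c b) * v a * v b) * s ^ 2
            + (∑ a, (dT2 (K1 a) t q + dQ2 K0 a t q - 2 * (∑ b, K2 a b t q * Q q b)
                + ∑ b, K1 b t q * A q b a) * v a) * s
            + (dT2 K0 t q - (∑ a, K1 a t q * Q q a)) = 0 := by
          intro s
          have hall := h' t q (fun i => s * v i)
          have s3 : (∑ a, ∑ b, ∑ c, dQ2 (K2 a b) c t q * (s * v a) * (s * v b) * (s * v c))
              = s ^ 3 * ∑ a, ∑ b, ∑ c, dQ2 (K2 a b) c t q * v a * v b * v c :=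
            scale3 _ s v
          have s2 : (∑ a, ∑ b, (dT2 (K2 a b) t q + dQ2 (K1 a) b t q
                + 2 * ∑ c, K2 c a t q * A q c b) * (s * v a) * (s * v b))
              = s ^ 2 * ∑ a, ∑ b, (dT2 (K2 a b) t q + dQ2 (K1 a) b t q
                + 2 * ∑ c, K2 c a t q * A q c b) * v a * v b :=
            scale2 _ s v
          have s1 : (∑ a, (dT2 (K1 a) t q + dQ2 K0 a t q - 2 * (∑ b, K2 a b t q * Q q b)
                + ∑ b, K1 b t q * A q b a) * (s * v a))
              = s * ∑ a, (dT2 (K1 a) t q + dQ2 K0 a t q - 2 * (∑ b, K2 a b t q * Q q b)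
                + ∑ b, K1 b t q * A q b a) * v a :=
            scale1 _ s v
          linarith [hall, s3, s2, s1]
        exact poly3_zero fun s => by linarith [hform s]
      exact ⟨fun v => (hpoly v).1, fun v => (hpoly v).2.1, fun v => (hpoly v).2.2.1,
        (hpoly (fun _ => 0)).2.2.2⟩
    refine ⟨?_, ?_, ?_, ?_⟩
    · intro t q a b c
      have h6 : dQ2 (K2 a b) c t q + dQ2 (K2 a c) b t q + dQ2 (K2 b a) c t q
          + dQ2 (K2 b c) a t q + dQ2 (K2 c a) b t q + dQ2 (K2 c b) a t q = 0 :=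
        cubic_extract (T := fun a b c => dQ2 (K2 a b) c t q) (hsep t q).1 a b c
      have e1 := hdQ2sym a b c t q
      have e2 := hdQ2sym a c b t q
      have e3 := hdQ2sym b c a t q
      linarith
    · intro t q a b
      have hM : (dT2 (K2 a b) t q + dQ2 (K1 a) b t q + 2 * ∑ c, K2 c a t q * A q c b)
          + (dT2 (K2 b a) t q + dQ2 (K1 b) a t q + 2 * ∑ c, K2 c b t q * A q c a) = 0 :=
        quad_extract (M := fun a b => dT2 (K2 a b) t q + dQ2 (K1 a) b t q
          + 2 * ∑ c, K2 c a t q * A q c b) (hsep t q).2.1 a b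
      have e1 := hdT2sym a b t q
      linarith
    · intro t q a
      have hL : dT2 (K1 a) t q + dQ2 K0 a t q - 2 * (∑ b, K2 a b t q * Q q b)
          + (∑ b, K1 b t q * A q b a) = 0 :=
        lin_extract (L := fun a => dT2 (K1 a) t q + dQ2 K0 a t q
          - 2 * (∑ b, K2 a b t q * Q q b) + ∑ b, K1 b t q * A q b a) (hsep t q).2.2.1 a
      linarith
    · intro t q
      exact (hsep t q).2.2.2
  · -- backward direction
    rintro ⟨h1, h2, h3, h4⟩ t q v
    rw [key t q v]
    have z3 : (∑ a, ∑ b, ∑ c, dQ2 (K2 a b) c t q * v a * v b * v c) = 0 := by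
      have hrot1 : (∑ a, ∑ b, ∑ c, dQ2 (K2 a b) c t q * v a * v b * v c)
          = ∑ a, ∑ b, ∑ c, dQ2 (K2 c a) b t q * v a * v b * v c := by
        rw [rot3 (fun a b c => dQ2 (K2 a b) c t q * v a * v b * v c)]
        exact Finset.sum_congr rfl fun a _ => Finset.sum_congr rfl fun b _ =>
          Finset.sum_congr rfl fun c _ => by ring
      have hrot2 : (∑ a, ∑ b, ∑ c, dQ2 (K2 a b) c t q * v a * v b * v c)
          = ∑ a, ∑ b, ∑ c, dQ2 (K2 b c) a t q * v a * v b * v c := by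
        rw [rot3 (fun a b c => dQ2 (K2 a b) c t q * v a * v b * v c),
          rot3 (fun a b c => dQ2 (K2 c a) b t q * v c * v a * v b)]
        exact Finset.sum_congr rfl fun a _ => Finset.sum_congr rfl fun b _ =>
          Finset.sum_congr rfl fun c _ => by ring
      have hsum0 : (∑ a, ∑ b, ∑ c, dQ2 (K2 a b) c t q * v a * v b * v c)
          + (∑ a, ∑ b, ∑ c, dQ2 (K2 b c) a t q * v a * v b * v c)
          + (∑ a, ∑ b, ∑ c, dQ2 (K2 c a) b t q * v a * v b * v c) = 0 := by
        simp only [← Finset.sum_add_distrib]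
        refine Finset.sum_eq_zero fun a _ => Finset.sum_eq_zero fun b _ =>
          Finset.sum_eq_zero fun c _ => ?_
        have := h1 t q a b c
        linear_combination (v a * v b * v c) * this
      linarith
    have z2 : (∑ a, ∑ b, (dT2 (K2 a b) t q + dQ2 (K1 a) b t q
        + 2 * ∑ c, K2 c a t q * A q c b) * v a * v b) = 0 := by
      have hswap : (∑ a, ∑ b, (dT2 (K2 a b) t q + dQ2 (K1 a) b t q
          + 2 * ∑ c, K2 c a t q * A q c b) * v a * v b)
          = ∑ a, ∑ b, (dT2 (K2 b a) t q + dQ2 (K1 b) a t q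
            + 2 * ∑ c, K2 c b t q * A q c a) * v a * v b := by
        rw [sum2_swap (fun a b => (dT2 (K2 a b) t q + dQ2 (K1 a) b t q
          + 2 * ∑ c, K2 c a t q * A q c b) * v a * v b)]
        exact Finset.sum_congr rfl fun a _ => Finset.sum_congr rfl fun b _ => by ring
      have hsum0 : (∑ a, ∑ b, (dT2 (K2 a b) t q + dQ2 (K1 a) b t q
          + 2 * ∑ c, K2 c a t q * A q c b) * v a * v b)
          + (∑ a, ∑ b, (dT2 (K2 b a) t q + dQ2 (K1 b) a t q
            + 2 * ∑ c, K2 c b t q * A q c a) * v a * v b) = 0 := by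
        simp only [← Finset.sum_add_distrib]
        refine Finset.sum_eq_zero fun a _ => Finset.sum_eq_zero fun b _ => ?_
        have hc := h2 t q a b
        have he := hdT2sym a b t q
        linear_combination (v a * v b) * (2 * hc) - (v a * v b) * he
      linarith [hswap, hsum0]
    have z1 : (∑ a, (dT2 (K1 a) t q + dQ2 K0 a t q - 2 * (∑ b, K2 a b t q * Q q b)
        + ∑ b, K1 b t q * A q b a) * v a) = 0 := by
      refine Finset.sum_eq_zero fun a _ => ?_
      have := h3 t q a
      linear_combination (v a) * this
    have z0 := h4 t q
    linarith
end
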